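/- arXiv:2208.00294 — 6 statements merged into one kernel-verified Lean document; each statement's English description precedes it below -/
import Mathlib

section
/- Let m ≥ 3 be an integer with m ∉ {3, 4, 6, 8, 10, 12, 14, 18, 20, 24, 30, 36, 42, 60}. Then φ(m) > m^{0.7}. -/
open Real

/- ### Numeric comparison helpers -/

private lemma key_le1 (a b c d : ℕ) (h : a^10 * b^7 ≤ c^10 * d^10) :
    (a:ℝ) * (b:ℝ)^(0.7:ℝ) ≤ (c:ℝ) * (d:ℝ) := by
  have e : (((b:ℝ))^(0.7:ℝ))^(10:ℕ) = ((b:ℝ))^(7:ℕ) := by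
    rw [← Real.rpow_natCast ((b:ℝ)^(0.7:ℝ)) 10, ← Real.rpow_mul (Nat.cast_nonneg b),
      show (0.7:ℝ) * (10:ℕ) = ((7:ℕ):ℝ) by norm_num, Real.rpow_natCast]
  have h1 : ((a:ℝ) * (b:ℝ)^(0.7:ℝ))^(10:ℕ) ≤ ((c:ℝ) * (d:ℝ))^(10:ℕ) := by
    rw [mul_pow, mul_pow, e]
    calc ((a:ℝ))^10 * (b:ℝ)^7 = ((a^10 * b^7 : ℕ) : ℝ) := by push_cast; ring
      _ ≤ ((c^10 * d^10 : ℕ) : ℝ) := by exact_mod_cast h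
      _ = ((c:ℝ))^10 * (d:ℝ)^10 := by push_cast; ring
  have hA : (0:ℝ) ≤ (a:ℝ) * (b:ℝ)^(0.7:ℝ) := by positivity
  have hC : (0:ℝ) ≤ (c:ℝ) * (d:ℝ) := by positivity
  exact (pow_le_pow_iff_left₀ hA hC (by norm_num)).mp h1

private lemma key_lt1 (a b c d : ℕ) (h : a^10 * b^7 < c^10 * d^10) :
    (a:ℝ) * (b:ℝ)^(0.7:ℝ) < (c:ℝ) * (d:ℝ) := by
  have e : (((b:ℝ))^(0.7:ℝ))^(10:ℕ) = ((b:ℝ))^(7:ℕ) := by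
    rw [← Real.rpow_natCast ((b:ℝ)^(0.7:ℝ)) 10, ← Real.rpow_mul (Nat.cast_nonneg b),
      show (0.7:ℝ) * (10:ℕ) = ((7:ℕ):ℝ) by norm_num, Real.rpow_natCast]
  have h1 : ((a:ℝ) * (b:ℝ)^(0.7:ℝ))^(10:ℕ) < ((c:ℝ) * (d:ℝ))^(10:ℕ) := by
    rw [mul_pow, mul_pow, e]
    calc ((a:ℝ))^10 * (b:ℝ)^7 = ((a^10 * b^7 : ℕ) : ℝ) := by push_cast; ring
      _ < ((c^10 * d^10 : ℕ) : ℝ) := by exact_mod_cast h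
      _ = ((c:ℝ))^10 * (d:ℝ)^10 := by push_cast; ring
  have hA : (0:ℝ) ≤ (a:ℝ) * (b:ℝ)^(0.7:ℝ) := by positivity
  have hC : (0:ℝ) ≤ (c:ℝ) * (d:ℝ) := by positivity
  exact lt_of_pow_lt_pow_left₀ 10 hC h1

/- ### Prime power totient bounds -/

private lemma pp_frac (p k c : ℕ) (hp : p.Prime) (hk : 1 ≤ k) (hc : c + 1 ≤ p) :
    c * p^k ≤ (c+1) * (p^k).totient := by
  rw [Nat.totient_prime_pow hp hk]
  obtain ⟨j, rfl⟩ : ∃ j, k = j + 1 := ⟨k-1, by omega⟩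
  simp only [Nat.add_sub_cancel]
  calc c * p^(j+1) = p^j * (c*p) := by ring
    _ ≤ p^j * ((c+1)*(p-1)) := Nat.mul_le_mul_left _ (by
        obtain ⟨d, rfl⟩ : ∃ d, p = c + 1 + d := ⟨p - (c+1), by omega⟩
        have e : c + 1 + d - 1 = c + d := by omega
        rw [e]; nlinarith)
    _ = (c+1) * (p^j * (p-1)) := by ring

-- S(q) ≥ 129/100 for q = p^k, p ≥ 5
private lemma ppB (p k : ℕ) (hp : p.Prime) (h5 : 5 ≤ p) (hk : 1 ≤ k) :
    129 * ((p^k : ℕ):ℝ)^(0.7:ℝ) ≤ 100 * ((p^k).totient : ℝ) := by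
  have hq5 : 5 ≤ p^k := le_trans h5 (Nat.le_self_pow (by omega) p)
  have h1 : ((129:ℕ):ℝ) * ((p^k:ℕ):ℝ)^(0.7:ℝ) ≤ ((80:ℕ):ℝ) * ((p^k:ℕ):ℝ) := by
    apply key_le1
    calc 129^10 * (p^k)^7 ≤ (80^10 * (p^k)^3) * (p^k)^7 := by
          refine Nat.mul_le_mul_right _ ?_
          calc (129:ℕ)^10 ≤ 80^10 * 5^3 := by norm_num
            _ ≤ 80^10 * (p^k)^3 := Nat.mul_le_mul_left _ (Nat.pow_le_pow_left hq5 3)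
      _ = 80^10 * (p^k)^10 := by ring
  have h2 : 4 * p^k ≤ 5 * (p^k).totient := pp_frac p k 4 hp hk (by omega)
  have h2' : 4 * ((p^k : ℕ):ℝ) ≤ 5 * ((p^k).totient : ℝ) := by exact_mod_cast h2
  push_cast at h1 h2' ⊢
  linarith

-- S(q) ≥ 1 for q = p^k, p ≥ 5
private lemma ppA (p k : ℕ) (hp : p.Prime) (h5 : 5 ≤ p) (hk : 1 ≤ k) :
    ((p^k : ℕ):ℝ)^(0.7:ℝ) ≤ ((p^k).totient : ℝ) := by
  have := ppB p k hp h5 hk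
  have h0 : (0:ℝ) ≤ ((p^k : ℕ):ℝ)^(0.7:ℝ) := Real.rpow_nonneg (Nat.cast_nonneg _) _
  linarith

-- S(q) ≥ 153/100 for q = p^k, p ≥ 7
private lemma ppC (p k : ℕ) (hp : p.Prime) (h7 : 7 ≤ p) (hk : 1 ≤ k) :
    153 * ((p^k : ℕ):ℝ)^(0.7:ℝ) ≤ 100 * ((p^k).totient : ℝ) := by
  have hq7 : 7 ≤ p^k := le_trans h7 (Nat.le_self_pow (by omega) p)
  have h1 : ((1071:ℕ):ℝ) * ((p^k:ℕ):ℝ)^(0.7:ℝ) ≤ ((600:ℕ):ℝ) * ((p^k:ℕ):ℝ) := by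
    apply key_le1
    calc 1071^10 * (p^k)^7 ≤ (600^10 * (p^k)^3) * (p^k)^7 := by
          refine Nat.mul_le_mul_right _ ?_
          calc (1071:ℕ)^10 ≤ 600^10 * 7^3 := by norm_num
            _ ≤ 600^10 * (p^k)^3 := Nat.mul_le_mul_left _ (Nat.pow_le_pow_left hq7 3)
      _ = 600^10 * (p^k)^10 := by ring
  have h2 : 6 * p^k ≤ 7 * (p^k).totient := pp_frac p k 6 hp hk (by omega)
  have h2' : 6 * ((p^k : ℕ):ℝ) ≤ 7 * ((p^k).totient : ℝ) := by exact_mod_cast h2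
  push_cast at h1 h2' ⊢
  linarith

-- S(q) ≥ 186/100 for q = p^k, p ≥ 5, k ≥ 2
private lemma ppD (p k : ℕ) (hp : p.Prime) (h5 : 5 ≤ p) (hk : 2 ≤ k) :
    186 * ((p^k : ℕ):ℝ)^(0.7:ℝ) ≤ 100 * ((p^k).totient : ℝ) := by
  have hq25 : 25 ≤ p^k := by
    calc (25:ℕ) = 5^2 := by norm_num
      _ ≤ p^2 := Nat.pow_le_pow_left h5 2
      _ ≤ p^k := Nat.pow_le_pow_right (by omega) hk
  have h1 : ((186:ℕ):ℝ) * ((p^k:ℕ):ℝ)^(0.7:ℝ) ≤ ((80:ℕ):ℝ) * ((p^k:ℕ):ℝ) := by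
    apply key_le1
    calc 186^10 * (p^k)^7 ≤ (80^10 * (p^k)^3) * (p^k)^7 := by
          refine Nat.mul_le_mul_right _ ?_
          calc (186:ℕ)^10 ≤ 80^10 * 25^3 := by norm_num
            _ ≤ 80^10 * (p^k)^3 := Nat.mul_le_mul_left _ (Nat.pow_le_pow_left hq25 3)
      _ = 80^10 * (p^k)^10 := by ring
  have h2 : 4 * p^k ≤ 5 * (p^k).totient := pp_frac p k 4 hp (by omega) (by omega)
  have h2' : 4 * ((p^k : ℕ):ℝ) ≤ 5 * ((p^k).totient : ℝ) := by exact_mod_cast h2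
  push_cast at h1 h2' ⊢
  linarith

-- S(q) ≥ 186/100 for q = p^k, p ≥ 11
private lemma ppE (p k : ℕ) (hp : p.Prime) (h11 : 11 ≤ p) (hk : 1 ≤ k) :
    186 * ((p^k : ℕ):ℝ)^(0.7:ℝ) ≤ 100 * ((p^k).totient : ℝ) := by
  have hq11 : 11 ≤ p^k := le_trans h11 (Nat.le_self_pow (by omega) p)
  have h1 : ((2046:ℕ):ℝ) * ((p^k:ℕ):ℝ)^(0.7:ℝ) ≤ ((1000:ℕ):ℝ) * ((p^k:ℕ):ℝ) := by
    apply key_le1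
    calc 2046^10 * (p^k)^7 ≤ (1000^10 * (p^k)^3) * (p^k)^7 := by
          refine Nat.mul_le_mul_right _ ?_
          calc (2046:ℕ)^10 ≤ 1000^10 * 11^3 := by norm_num
            _ ≤ 1000^10 * (p^k)^3 := Nat.mul_le_mul_left _ (Nat.pow_le_pow_left hq11 3)
      _ = 1000^10 * (p^k)^10 := by ring
  have h2 : 10 * p^k ≤ 11 * (p^k).totient := pp_frac p k 10 hp hk (by omega)
  have h2' : 10 * ((p^k : ℕ):ℝ) ≤ 11 * ((p^k).totient : ℝ) := by exact_mod_cast h2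
  push_cast at h1 h2' ⊢
  linarith

/- ### Decomposition of a number coprime to 6 -/

private lemma decomp (r : ℕ) (hr : 1 < r) (h6 : Nat.Coprime r 6) :
    ∃ p k s, p.Prime ∧ 5 ≤ p ∧ 1 ≤ k ∧ r = p ^ k * s ∧ Nat.Coprime (p ^ k) s ∧
      Nat.Coprime s 6 ∧ Nat.Coprime s p ∧ 0 < s ∧ s < r := by
  have hr0 : r ≠ 0 := by omega
  have hr1 : r ≠ 1 := by omega
  have hp : (r.minFac).Prime := Nat.minFac_prime hr1
  have hpd : r.minFac ∣ r := Nat.minFac_dvd r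
  have h6' : Nat.gcd r 6 = 1 := h6
  have hp2 : r.minFac ≠ 2 := by
    intro h
    have h2 : (2:ℕ) ∣ Nat.gcd r 6 := Nat.dvd_gcd (h ▸ hpd) (by norm_num)
    rw [h6'] at h2; norm_num at h2
  have hp3 : r.minFac ≠ 3 := by
    intro h
    have h2 : (3:ℕ) ∣ Nat.gcd r 6 := Nat.dvd_gcd (h ▸ hpd) (by norm_num)
    rw [h6'] at h2; norm_num at h2
  have hp4 : r.minFac ≠ 4 := by intro h; rw [h] at hp; norm_num at hp
  have hp5 : 5 ≤ r.minFac := by have := hp.two_le; omega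
  have hk : 1 ≤ r.factorization (r.minFac) := hp.factorization_pos_of_dvd hr0 hpd
  refine ⟨r.minFac, r.factorization (r.minFac), r / r.minFac ^ r.factorization (r.minFac),
    hp, hp5, hk,
    (Nat.ordProj_mul_ordCompl_eq_self r (r.minFac)).symm,
    Nat.Coprime.pow_left _ (Nat.coprime_ordCompl hp hr0),
    Nat.Coprime.coprime_dvd_left (Nat.ordCompl_dvd r (r.minFac)) h6,
    (Nat.coprime_ordCompl hp hr0).symm,
    Nat.ordCompl_pos (r.minFac) hr0, ?_⟩
  have h2 : 2 ≤ r.minFac ^ r.factorization (r.minFac) :=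
    le_trans hp.two_le (Nat.le_self_pow (by omega) _)
  have h3 := Nat.ordProj_mul_ordCompl_eq_self r (r.minFac)
  have h1 : 0 < r / r.minFac ^ r.factorization (r.minFac) :=
    Nat.ordCompl_pos (r.minFac) hr0
  calc r / r.minFac ^ r.factorization (r.minFac)
      < 2 * (r / r.minFac ^ r.factorization (r.minFac)) := by omega
    _ ≤ r.minFac ^ r.factorization (r.minFac) * (r / r.minFac ^ r.factorization (r.minFac)) :=
        Nat.mul_le_mul_right _ h2
    _ = r := h3

/- ### The main lower bounds for numbers coprime to 6 -/

-- L1 : φ(r) ≥ r^0.7 for r coprime to 6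
private lemma L1 : ∀ r : ℕ, 0 < r → Nat.Coprime r 6 →
    ((r : ℕ):ℝ)^(0.7:ℝ) ≤ (r.totient : ℝ) := by
  intro r
  induction r using Nat.strong_induction_on with
  | _ r ih =>
    intro hr h6
    rcases eq_or_lt_of_le (show 1 ≤ r from hr) with h1 | h1
    · rw [← h1]; simp [Nat.totient_one]
    · obtain ⟨p, k, s, hp, hp5, hk, hre, hcops, hs6, _, hs0, hslt⟩ := decomp r h1 h6
      rw [hre, Nat.totient_mul hcops, Nat.cast_mul, Nat.cast_mul,
        Real.mul_rpow (Nat.cast_nonneg _) (Nat.cast_nonneg _)]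
      exact mul_le_mul (ppA p k hp hp5 hk) (ih s hslt hs0 hs6)
        (Real.rpow_nonneg (Nat.cast_nonneg _) _) (Nat.cast_nonneg _)

-- L2 : φ(r) ≥ (129/100) r^0.7 for r > 1 coprime to 6
private lemma L2 (r : ℕ) (hr : 1 < r) (h6 : Nat.Coprime r 6) :
    129 * ((r : ℕ):ℝ)^(0.7:ℝ) ≤ 100 * (r.totient : ℝ) := by
  obtain ⟨p, k, s, hp, hp5, hk, hre, hcops, hs6, _, hs0, hslt⟩ := decomp r hr h6
  rw [hre, Nat.totient_mul hcops, Nat.cast_mul, Nat.cast_mul,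
    Real.mul_rpow (Nat.cast_nonneg _) (Nat.cast_nonneg _)]
  have h1 := ppB p k hp hp5 hk
  have h2 := L1 s hs0 hs6
  have e1 : (0:ℝ) ≤ ((s:ℕ):ℝ)^(0.7:ℝ) := Real.rpow_nonneg (Nat.cast_nonneg _) _
  have e2 : (0:ℝ) ≤ 100 * (((p^k:ℕ)).totient : ℝ) := by positivity
  nlinarith [mul_le_mul h1 h2 e1 e2]

-- L3 : φ(r) ≥ (153/100) r^0.7 for r > 1, r ≠ 5, coprime to 6
private lemma L3 (r : ℕ) (hr : 1 < r) (hr5 : r ≠ 5) (h6 : Nat.Coprime r 6) :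
    153 * ((r : ℕ):ℝ)^(0.7:ℝ) ≤ 100 * (r.totient : ℝ) := by
  obtain ⟨p, k, s, hp, hp5, hk, hre, hcops, hs6, hsp, hs0, hslt⟩ := decomp r hr h6
  rcases eq_or_ne s 1 with hs1 | hsne
  · -- s = 1, r = p^k
    have hrq : r = p ^ k := by rw [hre, hs1, mul_one]
    subst hrq
    rcases Nat.lt_or_ge k 2 with hk2 | hk2
    · -- k = 1
      have hk1 : k = 1 := by omega
      subst hk1
      have hpne5 : p ≠ 5 := by intro h; rw [h] at hr5; simp at hr5
      have hp6 : p ≠ 6 := by intro h; rw [h] at hp; norm_num at hp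
      exact ppC p 1 hp (by omega) (by omega)
    · have := ppD p k hp hp5 hk2
      have e1 : (0:ℝ) ≤ ((p^k:ℕ):ℝ)^(0.7:ℝ) := Real.rpow_nonneg (Nat.cast_nonneg _) _
      linarith
  · -- s > 1
    have hs1 : 1 < s := by omega
    rw [hre, Nat.totient_mul hcops, Nat.cast_mul, Nat.cast_mul,
      Real.mul_rpow (Nat.cast_nonneg _) (Nat.cast_nonneg _)]
    have h1 := ppB p k hp hp5 hk
    have h2 := L2 s hs1 hs6
    have e1 : (0:ℝ) ≤ 129 * ((s:ℕ):ℝ)^(0.7:ℝ) := by positivity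
    have e2 : (0:ℝ) ≤ 100 * (((p^k:ℕ)).totient : ℝ) := by positivity
    have e3 : (0:ℝ) ≤ ((p^k:ℕ):ℝ)^(0.7:ℝ) * ((s:ℕ):ℝ)^(0.7:ℝ) := by positivity
    nlinarith [mul_le_mul h1 h2 e1 e2]

-- L4 : φ(r) ≥ (186/100) r^0.7 for r > 1, r ∉ {5,7}, coprime to 6
private lemma L4 (r : ℕ) (hr : 1 < r) (hr5 : r ≠ 5) (hr7 : r ≠ 7) (h6 : Nat.Coprime r 6) :
    186 * ((r : ℕ):ℝ)^(0.7:ℝ) ≤ 100 * (r.totient : ℝ) := by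
  obtain ⟨p, k, s, hp, hp5, hk, hre, hcops, hs6, hsp, hs0, hslt⟩ := decomp r hr h6
  rcases eq_or_ne s 1 with hs1 | hsne
  · -- s = 1, r = p^k
    have hrq : r = p ^ k := by rw [hre, hs1, mul_one]
    subst hrq
    rcases Nat.lt_or_ge k 2 with hk2 | hk2
    · have hk1 : k = 1 := by omega
      subst hk1
      have hpne5 : p ≠ 5 := by intro h; rw [h] at hr5; simp at hr5
      have hpne7 : p ≠ 7 := by intro h; rw [h] at hr7; simp at hr7
      have hp6 : p ≠ 6 := by intro h; rw [h] at hp; norm_num at hp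
      have hp8 : p ≠ 8 := by intro h; rw [h] at hp; norm_num at hp
      have hp9 : p ≠ 9 := by intro h; rw [h] at hp; norm_num at hp
      have hp10 : p ≠ 10 := by intro h; rw [h] at hp; norm_num at hp
      exact ppE p 1 hp (by omega) (by omega)
    · exact ppD p k hp hp5 hk2
  · -- s > 1
    have hs1 : 1 < s := by omega
    rw [hre, Nat.totient_mul hcops, Nat.cast_mul, Nat.cast_mul,
      Real.mul_rpow (Nat.cast_nonneg _) (Nat.cast_nonneg _)]
    rcases eq_or_ne p 5 with hpe5 | hpn5
    · -- p = 5 : s ≠ 5, use 129 on p^k and 153 on s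
      have hs5 : s ≠ 5 := by
        intro h
        rw [h, hpe5] at hsp
        norm_num [Nat.Coprime] at hsp
      have h1 := ppB p k hp hp5 hk
      have h2 := L3 s hs1 hs5 hs6
      have e1 : (0:ℝ) ≤ 153 * ((s:ℕ):ℝ)^(0.7:ℝ) := by positivity
      have e2 : (0:ℝ) ≤ 100 * (((p^k:ℕ)).totient : ℝ) := by positivity
      have e3 : (0:ℝ) ≤ ((p^k:ℕ):ℝ)^(0.7:ℝ) * ((s:ℕ):ℝ)^(0.7:ℝ) := by positivity
      nlinarith [mul_le_mul h1 h2 e1 e2]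
    · -- p ≠ 5 hence p ≥ 7 : use 153 on p^k and 129 on s
      have hp6 : p ≠ 6 := by intro h; rw [h] at hp; norm_num at hp
      have h1 := ppC p k hp (by omega) hk
      have h2 := L2 s hs1 hs6
      have e1 : (0:ℝ) ≤ 129 * ((s:ℕ):ℝ)^(0.7:ℝ) := by positivity
      have e2 : (0:ℝ) ≤ 100 * (((p^k:ℕ)).totient : ℝ) := by positivity
      have e3 : (0:ℝ) ≤ ((p^k:ℕ):ℝ)^(0.7:ℝ) * ((s:ℕ):ℝ)^(0.7:ℝ) := by positivity
      nlinarith [mul_le_mul h1 h2 e1 e2]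

/- ### Assembling -/

private lemma assemble (n r C : ℕ) (hn0 : 0 < n) (hr0 : 0 < r)
    (hr : (C:ℝ) * ((r : ℕ):ℝ)^(0.7:ℝ) ≤ 100 * (r.totient : ℝ))
    (hn : 100 * ((n : ℕ):ℝ)^(0.7:ℝ) < (C:ℝ) * (n.totient : ℝ)) :
    ((n : ℕ):ℝ)^(0.7:ℝ) * ((r : ℕ):ℝ)^(0.7:ℝ) < (n.totient : ℝ) * (r.totient : ℝ) := by
  have hx : (0:ℝ) < ((n:ℕ):ℝ)^(0.7:ℝ) :=
    Real.rpow_pos_of_pos (by exact_mod_cast hn0) _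
  have hy : (0:ℝ) < ((r:ℕ):ℝ)^(0.7:ℝ) :=
    Real.rpow_pos_of_pos (by exact_mod_cast hr0) _
  have hfn : (0:ℝ) ≤ (n.totient : ℝ) := Nat.cast_nonneg _
  have f1 := mul_lt_mul_of_pos_right hn hy
  have f2 := mul_le_mul_of_nonneg_left hr hfn
  nlinarith

/- ### Good cells -/

private lemma goodA (a : ℕ) (ha : 4 ≤ a) :
    100 * (((2^a : ℕ)):ℝ)^(0.7:ℝ) < 100 * (((2^a : ℕ)).totient : ℝ) := by
  have hφ : ((2:ℕ)^a).totient = 2^(a-1) := by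
    rw [Nat.totient_prime_pow Nat.prime_two (by omega)]; norm_num
  rw [hφ]
  have := key_lt1 100 (2^a) 100 (2^(a-1)) (by
    refine Nat.mul_lt_mul_of_le_of_lt (le_refl _) ?_ (by positivity)
    rw [← pow_mul, ← pow_mul]
    exact Nat.pow_lt_pow_right one_lt_two (by omega))
  exact_mod_cast this

private lemma goodB (b : ℕ) (hb : 2 ≤ b) :
    100 * (((3^b : ℕ)):ℝ)^(0.7:ℝ) < 100 * (((3^b : ℕ)).totient : ℝ) := by
  obtain ⟨c, rfl⟩ : ∃ c, b = c + 2 := ⟨b - 2, by omega⟩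
  have hφ : ((3:ℕ)^(c+2)).totient = 3^(c+1) * 2 := by
    rw [Nat.totient_prime_pow Nat.prime_three (by omega)]; norm_num
  rw [hφ]
  have := key_lt1 100 (3^(c+2)) 100 (3^(c+1)*2) (by
    refine Nat.mul_lt_mul_of_le_of_lt (le_refl _) ?_ (by positivity)
    have e1 : ((3:ℕ)^(c+2))^7 = 4782969 * 3^(7*c) := by ring
    have e2 : ((3:ℕ)^(c+1)*2)^10 = (60466176 * 3^(3*c)) * 3^(7*c) := by ring
    rw [e1, e2]
    refine Nat.mul_lt_mul_of_lt_of_le ?_ (le_refl _) (by positivity)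
    calc (4782969:ℕ) < 60466176 * 1 := by norm_num
      _ ≤ 60466176 * 3^(3*c) := Nat.mul_le_mul_left _ (Nat.one_le_pow _ _ (by norm_num)))
  exact_mod_cast this

private lemma goodM (a b : ℕ) (ha : 1 ≤ a) (hb : 1 ≤ b) (hn : 48 ≤ 2^a * 3^b) :
    100 * (((2^a * 3^b : ℕ)):ℝ)^(0.7:ℝ) < 100 * (((2^a * 3^b : ℕ)).totient : ℝ) := by
  obtain ⟨i, rfl⟩ : ∃ i, a = i + 1 := ⟨a - 1, by omega⟩
  obtain ⟨j, rfl⟩ : ∃ j, b = j + 1 := ⟨b - 1, by omega⟩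
  have hcop : Nat.Coprime (2^(i+1)) (3^(j+1)) :=
    Nat.Coprime.pow_left _ (Nat.Coprime.pow_right _ (by norm_num))
  have hφ : ((2:ℕ)^(i+1) * 3^(j+1)).totient = 2^(i+1) * 3^j := by
    rw [Nat.totient_mul hcop, Nat.totient_prime_pow Nat.prime_two (by omega),
      Nat.totient_prime_pow Nat.prime_three (by omega)]
    simp only [Nat.add_sub_cancel]
    ring
  have ht : 3 * ((2:ℕ)^(i+1) * 3^j) = 2^(i+1) * 3^(j+1) := by ring
  have h16 : 16 ≤ (2:ℕ)^(i+1) * 3^j := by omega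
  rw [hφ]
  have := key_lt1 100 (2^(i+1) * 3^(j+1)) 100 (2^(i+1) * 3^j) (by
    refine Nat.mul_lt_mul_of_le_of_lt (le_refl _) ?_ (by positivity)
    have e1 : ((2:ℕ)^(i+1) * 3^(j+1))^7 = 2187 * (2^(i+1) * 3^j)^7 := by ring
    have e2 : ((2:ℕ)^(i+1) * 3^j)^10 = (2^(i+1) * 3^j)^3 * (2^(i+1) * 3^j)^7 := by ring
    rw [e1, e2]
    refine Nat.mul_lt_mul_of_lt_of_le ?_ (le_refl _) (by positivity)
    calc (2187:ℕ) < 4096 := by norm_num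
      _ = 16^3 := by norm_num
      _ ≤ (2^(i+1) * 3^j)^3 := Nat.pow_le_pow_left h16 3)
  exact_mod_cast this

/- ### Cell numeric facts -/

private lemma cellnum (n fn C : ℕ) (hfn : n.totient = fn)
    (h : 100^10 * n^7 < C^10 * fn^10) :
    100 * ((n : ℕ):ℝ)^(0.7:ℝ) < (C:ℝ) * ((n.totient : ℕ):ℝ) := by
  rw [hfn]
  have := key_lt1 100 n C fn h
  exact_mod_cast this

/- ### Main theorem -/

/-- For `m ≥ 3` with
`m ∉ {3,4,6,8,10,12,14,18,20,24,30,36,42,60}`, one has `φ(m) > m^{0.7}`. -/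
theorem statement5 (m : ℕ) (hm : 3 ≤ m)
    (hne : m ∉ ({3, 4, 6, 8, 10, 12, 14, 18, 20, 24, 30, 36, 42, 60} : Finset ℕ)) :
    (m : ℝ) ^ (0.7 : ℝ) < (m.totient : ℝ) := by
  have hm0 : m ≠ 0 := by omega
  obtain ⟨a, m1, hm1e, hc1⟩ : ∃ a m1, m = 2^a * m1 ∧ Nat.Coprime 2 m1 :=
    ⟨_, _, (Nat.ordProj_mul_ordCompl_eq_self m 2).symm,
      Nat.coprime_ordCompl Nat.prime_two hm0⟩
  have hm10 : m1 ≠ 0 := by rintro rfl; simp at hm1e; omega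
  obtain ⟨b, r, hm2e, hc3⟩ : ∃ b r, m1 = 3^b * r ∧ Nat.Coprime 3 r :=
    ⟨_, _, (Nat.ordProj_mul_ordCompl_eq_self m1 3).symm,
      Nat.coprime_ordCompl Nat.prime_three hm10⟩
  have hc2r : Nat.Coprime 2 r :=
    Nat.Coprime.coprime_dvd_right ⟨3^b, by rw [hm2e]; ring⟩ hc1
  have hr6 : Nat.Coprime r 6 := by
    have h23 : Nat.Coprime (2*3) r := Nat.Coprime.mul hc2r hc3
    have h6 : Nat.Coprime 6 r := by norm_num at h23 ⊢; exact h23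
    exact h6.symm
  have hr0 : 0 < r := by
    rcases Nat.eq_zero_or_pos r with h | h
    · subst h; simp at hm2e; omega
    · exact h
  have hmn : m = 2^a * 3^b * r := by rw [hm1e, hm2e]; ring
  have hcop : Nat.Coprime (2^a * 3^b) r :=
    Nat.Coprime.mul (Nat.Coprime.pow_left a hc2r) (Nat.Coprime.pow_left b hc3)
  have hphi : m.totient = (2^a * 3^b).totient * r.totient := by
    rw [hmn, Nat.totient_mul hcop]
  have e1 : (m:ℝ) = ((2^a*3^b : ℕ):ℝ) * ((r:ℕ):ℝ) := by
    rw [hmn]; push_cast; ring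
  suffices h : ((2^a*3^b : ℕ):ℝ)^(0.7:ℝ) * ((r:ℕ):ℝ)^(0.7:ℝ) <
      (((2^a*3^b).totient:ℕ):ℝ) * ((r.totient:ℕ):ℝ) by
    calc (m:ℝ)^(0.7:ℝ) = (((2^a*3^b:ℕ):ℝ) * ((r:ℕ):ℝ))^(0.7:ℝ) := by rw [← e1]
      _ = ((2^a*3^b:ℕ):ℝ)^(0.7:ℝ) * ((r:ℕ):ℝ)^(0.7:ℝ) :=
          Real.mul_rpow (Nat.cast_nonneg _) (Nat.cast_nonneg _)
      _ < (((2^a*3^b).totient:ℕ):ℝ) * ((r.totient:ℕ):ℝ) := h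
      _ = (m.totient:ℝ) := by rw [hphi]; push_cast; ring
  clear hphi hcop hm1e hm2e hc1 hc2r hc3 hm10 e1
  have excl : ∀ v : ℕ, m = v →
      v ∈ ({3, 4, 6, 8, 10, 12, 14, 18, 20, 24, 30, 36, 42, 60} : Finset ℕ) → False :=
    fun v hv hmem => hne (hv ▸ hmem)
  have hL1 : ((100:ℕ):ℝ) * ((r : ℕ):ℝ)^(0.7:ℝ) ≤ 100 * (r.totient : ℝ) := by
    have := L1 r hr0 hr6
    exact_mod_cast mul_le_mul_of_nonneg_left this (by norm_num : (0:ℝ) ≤ (100:ℝ))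
  rcases Nat.lt_or_ge a 4 with ha | ha
  · interval_cases a
    · -- a = 0
      rcases Nat.lt_or_ge b 2 with hb | hb
      · interval_cases b
        · -- n = 1 : C = 129
          norm_num at hmn
          have hr1 : 1 < r := by omega
          exact assemble (2^0*3^0) r 129 (by norm_num) hr0
            (L2 r hr1 hr6) (cellnum (2^0*3^0) 1 129 (by decide) (by norm_num))
        · -- n = 3 : C = 129, r ≠ 1
          norm_num at hmn
          have hr1 : 1 < r := by
            rcases eq_or_ne r 1 with rfl | h
            · exact (excl 3 (by omega) (by decide)).elim
            · omega
          exact assemble (2^0*3^1) r 129 (by norm_num) hr0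
            (L2 r hr1 hr6) (cellnum (2^0*3^1) 2 129 (by decide) (by norm_num))
      · -- n = 3^b, b ≥ 2 : good
        simp only [pow_zero, one_mul]
        exact assemble (3^b) r 100 (by positivity) hr0 hL1
          (by exact_mod_cast goodB b hb)
    · -- a = 1
      rcases Nat.lt_or_ge b 3 with hb | hb
      · interval_cases b
        · -- n = 2 : C = 186, r ∉ {1,5,7}
          norm_num at hmn
          have hr1 : 1 < r := by omega
          have hr5 : r ≠ 5 := by rintro rfl; exact excl 10 (by omega) (by decide)
          have hr7 : r ≠ 7 := by rintro rfl; exact excl 14 (by omega) (by decide)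
          exact assemble (2^1*3^0) r 186 (by norm_num) hr0
            (L4 r hr1 hr5 hr7 hr6) (cellnum (2^1*3^0) 1 186 (by decide) (by norm_num))
        · -- n = 6 : C = 186, r ∉ {1,5,7}
          norm_num at hmn
          have hr1 : 1 < r := by
            rcases eq_or_ne r 1 with rfl | h
            · exact (excl 6 (by omega) (by decide)).elim
            · omega
          have hr5 : r ≠ 5 := by rintro rfl; exact excl 30 (by omega) (by decide)
          have hr7 : r ≠ 7 := by rintro rfl; exact excl 42 (by omega) (by decide)
          exact assemble (2^1*3^1) r 186 (by norm_num) hr0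
            (L4 r hr1 hr5 hr7 hr6) (cellnum (2^1*3^1) 2 186 (by decide) (by norm_num))
        · -- n = 18 : C = 129, r ≠ 1
          norm_num at hmn
          have hr1 : 1 < r := by
            rcases eq_or_ne r 1 with rfl | h
            · exact (excl 18 (by omega) (by decide)).elim
            · omega
          exact assemble (2^1*3^2) r 129 (by norm_num) hr0
            (L2 r hr1 hr6) (cellnum (2^1*3^2) 6 129 (by decide) (by norm_num))
      · -- n = 2·3^b, b ≥ 3 : good
        have h48 : 48 ≤ 2^1 * 3^b :=
          calc (48:ℕ) ≤ 2^1 * 3^3 := by norm_num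
            _ ≤ 2^1 * 3^b := Nat.mul_le_mul_left _ (Nat.pow_le_pow_right (by norm_num) hb)
        exact assemble (2^1*3^b) r 100 (by positivity) hr0 hL1
          (by exact_mod_cast goodM 1 b (by norm_num) (by omega) h48)
    · -- a = 2
      rcases Nat.lt_or_ge b 3 with hb | hb
      · interval_cases b
        · -- n = 4 : C = 153, r ∉ {1,5}
          norm_num at hmn
          have hr1 : 1 < r := by
            rcases eq_or_ne r 1 with rfl | h
            · exact (excl 4 (by omega) (by decide)).elim
            · omega
          have hr5 : r ≠ 5 := by rintro rfl; exact excl 20 (by omega) (by decide)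
          exact assemble (2^2*3^0) r 153 (by norm_num) hr0
            (L3 r hr1 hr5 hr6) (cellnum (2^2*3^0) 2 153 (by decide) (by norm_num))
        · -- n = 12 : C = 153, r ∉ {1,5}
          norm_num at hmn
          have hr1 : 1 < r := by
            rcases eq_or_ne r 1 with rfl | h
            · exact (excl 12 (by omega) (by decide)).elim
            · omega
          have hr5 : r ≠ 5 := by rintro rfl; exact excl 60 (by omega) (by decide)
          exact assemble (2^2*3^1) r 153 (by norm_num) hr0
            (L3 r hr1 hr5 hr6) (cellnum (2^2*3^1) 4 153 (by decide) (by norm_num))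
        · -- n = 36 : C = 129, r ≠ 1
          norm_num at hmn
          have hr1 : 1 < r := by
            rcases eq_or_ne r 1 with rfl | h
            · exact (excl 36 (by omega) (by decide)).elim
            · omega
          exact assemble (2^2*3^2) r 129 (by norm_num) hr0
            (L2 r hr1 hr6) (cellnum (2^2*3^2) 12 129 (by decide) (by norm_num))
      · -- n = 4·3^b, b ≥ 3 : good
        have h48 : 48 ≤ 2^2 * 3^b :=
          calc (48:ℕ) ≤ 2^2 * 3^3 := by norm_num
            _ ≤ 2^2 * 3^b := Nat.mul_le_mul_left _ (Nat.pow_le_pow_right (by norm_num) hb)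
        exact assemble (2^2*3^b) r 100 (by positivity) hr0 hL1
          (by exact_mod_cast goodM 2 b (by norm_num) (by omega) h48)
    · -- a = 3
      rcases Nat.lt_or_ge b 2 with hb | hb
      · interval_cases b
        · -- n = 8 : C = 129, r ≠ 1
          norm_num at hmn
          have hr1 : 1 < r := by
            rcases eq_or_ne r 1 with rfl | h
            · exact (excl 8 (by omega) (by decide)).elim
            · omega
          exact assemble (2^3*3^0) r 129 (by norm_num) hr0
            (L2 r hr1 hr6) (cellnum (2^3*3^0) 4 129 (by decide) (by norm_num))
        · -- n = 24 : C = 129, r ≠ 1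
          norm_num at hmn
          have hr1 : 1 < r := by
            rcases eq_or_ne r 1 with rfl | h
            · exact (excl 24 (by omega) (by decide)).elim
            · omega
          exact assemble (2^3*3^1) r 129 (by norm_num) hr0
            (L2 r hr1 hr6) (cellnum (2^3*3^1) 8 129 (by decide) (by norm_num))
      · -- n = 8·3^b, b ≥ 2 : good
        have h48 : 48 ≤ 2^3 * 3^b :=
          calc (48:ℕ) ≤ 2^3 * 3^2 := by norm_num
            _ ≤ 2^3 * 3^b := Nat.mul_le_mul_left _ (Nat.pow_le_pow_right (by norm_num) hb)
        exact assemble (2^3*3^b) r 100 (by positivity) hr0 hL1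
          (by exact_mod_cast goodM 3 b (by norm_num) (by omega) h48)
  · -- a ≥ 4
    rcases Nat.eq_zero_or_pos b with hb | hb
    · subst hb
      simp only [pow_zero, mul_one]
      exact assemble (2^a) r 100 (by positivity) hr0 hL1
        (by exact_mod_cast goodA a ha)
    · have h48 : 48 ≤ 2^a * 3^b :=
        calc (48:ℕ) = 2^4 * 3^1 := by norm_num
          _ ≤ 2^a * 3^b := Nat.mul_le_mul (Nat.pow_le_pow_right (by norm_num) ha)
              (Nat.pow_le_pow_right (by norm_num) hb)
      exact assemble (2^a*3^b) r 100 (by positivity) hr0 hL1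
        (by exact_mod_cast goodM a b (by omega) hb h48)
end

section
/- Let H, x and y be positive real numbers with y ≥ 1, and assume log H ≥ x·e^{y/x} + x. Then y/(2·log log H) ≤ x ≤ (log H)/2. -/
/-- If `H, x, y > 0`, `y ≥ 1` and `log H ≥ x·e^{y/x} + x`,
then `y/(2 log log H) ≤ x ≤ (log H)/2`. -/
theorem statement13 (H x y : ℝ) (hH : 0 < H) (hx : 0 < x) (hy : 1 ≤ y)
    (h : x * Real.exp (y / x) + x ≤ Real.log H) :
    y / (2 * Real.log (Real.log H)) ≤ x ∧ x ≤ Real.log H / 2 := by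
  set s := y / x with hs
  have hs0 : 0 < s := div_pos (lt_of_lt_of_le one_pos hy) hx
  -- exp(s/2) ≥ s
  have h1 : Real.exp (s / 4) ≥ 1 + s / 4 := by
    have := Real.add_one_le_exp (s / 4); linarith
  have h2 : Real.exp (s / 2) ≥ s := by
    have he : Real.exp (s / 2) = Real.exp (s / 4) ^ 2 := by
      rw [← Real.exp_nat_mul]; ring_nf
    have hp : (0:ℝ) ≤ 1 + s / 4 := by linarith
    nlinarith [sq_nonneg (1 - s / 4)]
  -- exp s = exp(s/2) * exp(s/2)
  have h3 : Real.exp s = Real.exp (s / 2) * Real.exp (s / 2) := by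
    rw [← Real.exp_add]; ring_nf
  have hys : y = x * s := by rw [hs]; field_simp
  have h4 : y * Real.exp (s / 2) ≤ x * Real.exp s := by
    rw [h3, hys]
    nlinarith [mul_le_mul_of_nonneg_left h2 (mul_pos hx (Real.exp_pos (s / 2))).le]
  have h5 : Real.exp (s / 2) ≤ Real.log H := by
    nlinarith [Real.exp_pos (s / 2)]
  have h6 : s / 2 ≤ Real.log (Real.log H) := by
    calc s / 2 = Real.log (Real.exp (s / 2)) := (Real.log_exp _).symm
    _ ≤ Real.log (Real.log H) := Real.log_le_log (Real.exp_pos _) h5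
  have hLL : 0 < Real.log (Real.log H) := lt_of_lt_of_le (by linarith) h6
  constructor
  · rw [div_le_iff₀ (by linarith)]
    calc y = x * s := hys
    _ ≤ x * (2 * Real.log (Real.log H)) := by nlinarith
  · nlinarith [Real.one_le_exp (le_of_lt hs0)]
end

section
/- Let k ≥ 1 be an integer, let α_1, …, α_k be pairwise distinct non-zero integers, let μ ≥ 0 be an integer and let n be a positive integer. Then |B_{n,μ,0}(1)| ≤ (kn)!·C(kn+μ, μ)·∏_{i=1}^k (|α_i|+1)^n, where C(·,·) denotes the binomial coefficient and |·| the usual absolute value. -/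
open scoped BigOperators
open scoped Nat

noncomputable section

/-- `σ_i = (−1)^i ∑_{i₁+⋯+i_k=i, 0≤i_j≤n} C(n,i₁)⋯C(n,i_k) α₁^{n−i₁}⋯α_k^{n−i_k}`. -/
def sigmaCoeff {k : ℕ} (α : Fin k → ℤ) (n i : ℕ) : ℤ :=
  (-1) ^ i *
    ∑ v ∈ (Fintype.piFinset fun _ : Fin k => Finset.range (n + 1)).filter
      (fun v => ∑ j, v j = i),
      ∏ j, (n.choose (v j) : ℤ) * α j ^ (n - v j)

/-- `B_{n,μ,0}(1) = ∑_{i=0}^{kn} σ_i (kn+μ)!/(i+μ)!`. -/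
def B0 {k : ℕ} (α : Fin k → ℤ) (n μ : ℕ) : ℚ :=
  ∑ i ∈ Finset.range (k * n + 1),
    (sigmaCoeff α n i : ℚ) * ((k * n + μ)! : ℚ) / ((i + μ)! : ℚ)

/-- `B_{n,μ,j}(1) = (kn+μ)! ∑_{N=0}^{kn+μ−1} ∑_{h=0}^{min(kn,N)}
σ_{kn−h} (N−h)!/(kn+μ−h)! α_j^{N−h}`. -/
def Bj {k : ℕ} (α : Fin k → ℤ) (n μ : ℕ) (j : Fin k) : ℚ :=
  ((k * n + μ)! : ℚ) *
    ∑ N ∈ Finset.range (k * n + μ),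
      ∑ h ∈ Finset.range (min (k * n) N + 1),
        (sigmaCoeff α n (k * n - h) : ℚ) * ((N - h)! : ℚ) / ((k * n + μ - h)! : ℚ) *
          (α j : ℚ) ^ (N - h)

/-- `S_{n,μ,j}(1)` as an element of `ℚ_p`. -/
def Spadic (p : ℕ) [Fact p.Prime] {k : ℕ} (α : Fin k → ℤ) (n μ : ℕ) (j : Fin k) : ℚ_[p] :=
  ((k * n + μ)! : ℚ_[p]) * (n ! : ℚ_[p]) *
    ∑' h : ℕ, (h ! : ℚ_[p]) * ((n + h).choose h : ℚ_[p]) * (α j : ℚ_[p]) ^ (n + h + μ) *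
      ∑ i ∈ Finset.range (k * n + 1),
        (sigmaCoeff α n i : ℚ_[p]) * ((i + μ + n + h).choose (i + μ) : ℚ_[p]) *
          (α j : ℚ_[p]) ^ i

/-- `max_{1≤i≤k} |α_i|_p`. -/
def padicMaxAbs (p : ℕ) {k : ℕ} (α : Fin k → ℤ) : ℝ :=
  ⨆ j, ((padicNorm p ((α j : ℚ))) : ℝ)
/-- `|B_{n,μ,0}(1)| ≤ (kn)!·C(kn+μ,μ)·∏_{i=1}^k (|α_i|+1)^n`. -/
theorem statement14 (k : ℕ) (hk : 1 ≤ k) (α : Fin k → ℤ)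
    (hα : ∀ j, α j ≠ 0) (hαinj : Function.Injective α)
    (μ : ℕ) (n : ℕ) (hn : 0 < n) :
    |B0 α n μ| ≤ ((k * n)! : ℚ) * ((k * n + μ).choose μ : ℚ) *
      ∏ i : Fin k, ((|α i| : ℚ) + 1) ^ n := by
  have hfac : ∀ m : ℕ, (0:ℚ) < (m ! : ℚ) := fun m => by exact_mod_cast Nat.factorial_pos m
  set F : ℚ := ((k * n + μ)! : ℚ) with hF
  set T : ℕ → ℚ := fun i => ∑ v ∈ (Fintype.piFinset fun _ : Fin k => Finset.range (n + 1)).filter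
      (fun v => ∑ j, v j = i), ∏ j, (n.choose (v j) : ℚ) * |(α j : ℚ)| ^ (n - v j) with hT
  have hTnonneg : ∀ i, 0 ≤ T i := by
    intro i
    apply Finset.sum_nonneg
    intro v _
    apply Finset.prod_nonneg
    intro j _
    positivity
  have hsig : ∀ i, |(sigmaCoeff α n i : ℚ)| ≤ T i := by
    intro i
    rw [hT]
    have : (sigmaCoeff α n i : ℚ) = (-1)^i * ∑ v ∈ (Fintype.piFinset fun _ : Fin k => Finset.range (n + 1)).filter
      (fun v => ∑ j, v j = i), ∏ j, (n.choose (v j) : ℚ) * (α j : ℚ) ^ (n - v j) := by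
      simp [sigmaCoeff]
    rw [this, abs_mul, abs_pow, abs_neg, abs_one, one_pow, one_mul]
    refine (Finset.abs_sum_le_sum_abs _ _).trans ?_
    apply Finset.sum_le_sum
    intro v _
    rw [Finset.abs_prod]
    apply Finset.prod_le_prod (fun j _ => abs_nonneg _)
    intro j _
    rw [abs_mul, abs_pow]
    simp
  have h1 : |B0 α n μ| ≤ ∑ i ∈ Finset.range (k * n + 1), T i * (F / (μ ! : ℚ)) := by
    refine (Finset.abs_sum_le_sum_abs _ _).trans ?_
    apply Finset.sum_le_sum
    intro i _
    rw [abs_div, abs_mul, abs_of_nonneg (le_of_lt (hfac _)), abs_of_nonneg (le_of_lt (hfac _))]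
    rw [mul_div_assoc]
    have hd : F / ((i + μ)! : ℚ) ≤ F / (μ ! : ℚ) := by
      apply div_le_div_of_nonneg_left (le_of_lt (hfac _)) (hfac _)
      exact_mod_cast Nat.factorial_le (Nat.le_add_left μ i)
    have hd0 : 0 ≤ F / ((i + μ)! : ℚ) := div_nonneg (le_of_lt (hfac _)) (le_of_lt (hfac _))
    exact mul_le_mul (hsig i) hd hd0 (hTnonneg i)
  have h2 : ∑ i ∈ Finset.range (k * n + 1), T i = ∏ j : Fin k, ((|α j| : ℚ) + 1) ^ n := by
    rw [hT]
    rw [Finset.sum_fiberwise_of_maps_to (g := fun v : Fin k → ℕ => ∑ j, v j)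
      (fun v hv => by
        rw [Finset.mem_range, Nat.lt_succ_iff]
        rw [Fintype.mem_piFinset] at hv
        calc ∑ j, v j ≤ ∑ _j : Fin k, n := Finset.sum_le_sum (fun j _ => by
              have := hv j; rw [Finset.mem_range, Nat.lt_succ_iff] at this; exact this)
          _ = k * n := by simp [mul_comm])]
    rw [← Finset.prod_univ_sum (t := fun _ : Fin k => Finset.range (n+1)) (f := fun j m => (n.choose m : ℚ) * |(α j : ℚ)| ^ (n - m))]
    apply Finset.prod_congr rfl
    intro j _
    have := add_pow (1 : ℚ) |(α j : ℚ)| n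
    rw [show |(α j : ℚ)| + 1 = 1 + |(α j : ℚ)| by ring, this]
    apply Finset.sum_congr rfl
    intro i _
    ring
  calc |B0 α n μ| ≤ ∑ i ∈ Finset.range (k * n + 1), T i * (F / (μ ! : ℚ)) := h1
    _ = (∏ j : Fin k, ((|α j| : ℚ) + 1) ^ n) * (F / (μ ! : ℚ)) := by
        rw [← Finset.sum_mul, h2]
    _ = ((k * n)! : ℚ) * ((k * n + μ).choose μ : ℚ) * ∏ i : Fin k, ((|α i| : ℚ) + 1) ^ n := by
        rw [Nat.cast_choose ℚ (Nat.le_add_left μ (k*n))]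
        have h3 : k * n + μ - μ = k * n := by omega
        rw [h3, hF]
        field_simp
end
end

section
/- Let k ≥ 1 be an integer, let α_1, …, α_k be pairwise distinct non-zero integers, let μ ≥ 0 be an integer, let n be a positive integer and let 1 ≤ j ≤ k. Then |B_{n,μ,j}(1)| ≤ (kn+μ)!·(kn+μ)·|α_j|^{μ−1}·∏_{i=1}^k (|α_i|+|α_j|)^n, where |·| is the usual absolute value. -/
open scoped BigOperators
open scoped Nat

noncomputable section

set_option maxHeartbeats 1000000 in
lemma abs_sigma_le {k : ℕ} (α : Fin k → ℤ) (n i : ℕ) :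
    |(sigmaCoeff α n i : ℝ)| ≤
      ∑ v ∈ (Fintype.piFinset fun _ : Fin k => Finset.range (n + 1)).filter
        (fun v => ∑ j, v j = i),
        ∏ l, (n.choose (v l) : ℝ) * |(α l : ℝ)| ^ (n - v l) := by
  rw [sigmaCoeff]
  push_cast
  rw [abs_mul, abs_pow, abs_neg, abs_one, one_pow, one_mul]
  refine (Finset.abs_sum_le_sum_abs _ _).trans (Finset.sum_le_sum fun v hv => ?_)
  rw [Finset.abs_prod]
  refine Finset.prod_le_prod (fun l _ => abs_nonneg _) fun l _ => ?_
  rw [abs_mul, abs_pow, Nat.abs_cast]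

lemma key_sum_le {k : ℕ} (α : Fin k → ℤ) (n : ℕ) (c : ℝ) (hc : 0 ≤ c) :
    ∑ i ∈ Finset.range (k * n + 1), |(sigmaCoeff α n i : ℝ)| * c ^ i ≤
      ∏ l : Fin k, (|(α l : ℝ)| + c) ^ n := by
  have hmem : ∀ v ∈ Fintype.piFinset fun _ : Fin k => Finset.range (n + 1),
      (∑ l, v l) ∈ Finset.range (k * n + 1) := by
    intro v hv
    rw [Finset.mem_range, Nat.lt_succ_iff]
    calc ∑ l, v l ≤ ∑ _l : Fin k, n := Finset.sum_le_sum fun l _ => by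
          have := Finset.mem_range.mp (Fintype.mem_piFinset.mp hv l)
          omega
      _ = k * n := by simp [mul_comm]
  calc ∑ i ∈ Finset.range (k * n + 1), |(sigmaCoeff α n i : ℝ)| * c ^ i
      ≤ ∑ i ∈ Finset.range (k * n + 1),
          ∑ v ∈ (Fintype.piFinset fun _ : Fin k => Finset.range (n + 1)).filter
            (fun v => ∑ j, v j = i),
          ∏ l, c ^ v l * |(α l : ℝ)| ^ (n - v l) * (n.choose (v l) : ℝ) := by
        refine Finset.sum_le_sum fun i _ => ?_
        calc |(sigmaCoeff α n i : ℝ)| * c ^ i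
            ≤ (∑ v ∈ (Fintype.piFinset fun _ : Fin k => Finset.range (n + 1)).filter
                (fun v => ∑ j, v j = i),
                ∏ l, (n.choose (v l) : ℝ) * |(α l : ℝ)| ^ (n - v l)) * c ^ i := by
              exact mul_le_mul_of_nonneg_right (abs_sigma_le α n i) (pow_nonneg hc i)
          _ = _ := by
              rw [Finset.sum_mul]
              refine Finset.sum_congr rfl fun v hv => ?_
              have hsum : ∑ l, v l = i := (Finset.mem_filter.mp hv).2
              rw [← hsum, ← Finset.prod_pow_eq_pow_sum, ← Finset.prod_mul_distrib]
              exact Finset.prod_congr rfl fun l _ => by ring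
    _ = ∑ v ∈ Fintype.piFinset fun _ : Fin k => Finset.range (n + 1),
          ∏ l, c ^ v l * |(α l : ℝ)| ^ (n - v l) * (n.choose (v l) : ℝ) :=
        Finset.sum_fiberwise_of_maps_to hmem _
    _ = ∏ l : Fin k, ∑ m ∈ Finset.range (n + 1),
          c ^ m * |(α l : ℝ)| ^ (n - m) * (n.choose m : ℝ) :=
        (Finset.prod_univ_sum (fun _ : Fin k => Finset.range (n + 1))
          (fun l m => c ^ m * |(α l : ℝ)| ^ (n - m) * (n.choose m : ℝ))).symm
    _ = ∏ l : Fin k, (|(α l : ℝ)| + c) ^ n :=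
        Finset.prod_congr rfl fun l _ => by rw [← add_pow, add_comm]


set_option maxHeartbeats 1000000 in
/-- `|B_{n,μ,j}(1)| ≤ (kn+μ)!·(kn+μ)·|α_j|^{μ−1}·
∏_{i=1}^k (|α_i|+|α_j|)^n`. -/
theorem statement15 (k : ℕ) (hk : 1 ≤ k) (α : Fin k → ℤ)
    (hα : ∀ j, α j ≠ 0) (hαinj : Function.Injective α)
    (μ : ℕ) (n : ℕ) (hn : 0 < n) (j : Fin k) :
    |(Bj α n μ j : ℝ)| ≤ ((k * n + μ)! : ℝ) * ((k * n + μ : ℕ) : ℝ) *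
      (|(α j : ℝ)|) ^ ((μ : ℤ) - 1) *
      ∏ i : Fin k, (|(α i : ℝ)| + |(α j : ℝ)|) ^ n := by
  have hc : (0:ℝ) ≤ |(α j : ℝ)| := abs_nonneg _
  have h1 : (1:ℝ) ≤ |(α j : ℝ)| := by
    have h := Int.one_le_abs (hα j)
    exact_mod_cast h
  have hane : |(α j : ℝ)| ≠ 0 := by linarith
  set z : ℝ := |(α j : ℝ)| ^ ((μ:ℤ) - 1) with hzdef
  set P : ℝ := ∏ i : Fin k, (|(α i : ℝ)| + |(α j : ℝ)|) ^ n with hPdef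
  have hPnn : (0:ℝ) ≤ P := Finset.prod_nonneg fun i _ => pow_nonneg (by positivity) n
  have hznn : (0:ℝ) ≤ z := zpow_nonneg hc _
  have key := key_sum_le α n |(α j : ℝ)| hc
  have hB : (Bj α n μ j : ℝ) = ((k*n+μ)! : ℝ) *
      ∑ N ∈ Finset.range (k*n+μ), ∑ h ∈ Finset.range (min (k*n) N + 1),
        (sigmaCoeff α n (k*n - h) : ℝ) * ((N-h)! : ℝ) / ((k*n+μ-h)! : ℝ) *
          (α j : ℝ) ^ (N-h) := by
    rw [Bj]; push_cast; ring
  have inner : ∀ N ∈ Finset.range (k*n + μ),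
      |∑ h ∈ Finset.range (min (k*n) N + 1),
        (sigmaCoeff α n (k*n - h) : ℝ) * ((N - h)! : ℝ) / ((k*n + μ - h)! : ℝ) *
          (α j : ℝ) ^ (N - h)| ≤ z * P := by
    intro N hN
    rw [Finset.mem_range] at hN
    refine (Finset.abs_sum_le_sum_abs _ _).trans ?_
    calc ∑ h ∈ Finset.range (min (k*n) N + 1),
          |(sigmaCoeff α n (k*n - h) : ℝ) * ((N - h)! : ℝ) / ((k*n + μ - h)! : ℝ) *
            (α j : ℝ) ^ (N - h)|
        ≤ ∑ h ∈ Finset.range (min (k*n) N + 1),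
          z * (|(sigmaCoeff α n (k*n - h) : ℝ)| * |(α j:ℝ)| ^ (k*n - h)) := by
          refine Finset.sum_le_sum fun h hh => ?_
          rw [Finset.mem_range, Nat.lt_succ_iff] at hh
          have hhK : h ≤ k*n := le_trans hh (min_le_left _ _)
          have hhN : h ≤ N := le_trans hh (min_le_right _ _)
          have e1 : ((N-h)! : ℝ) / ((k*n+μ-h)! : ℝ) ≤ 1 := by
            rw [div_le_one (by positivity)]
            exact_mod_cast Nat.factorial_le (by omega)
          have e2 : |(α j:ℝ)| ^ (N - h) ≤ z * |(α j:ℝ)| ^ (k*n - h) := by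
            rw [hzdef, ← zpow_natCast |(α j:ℝ)| (k*n - h), ← zpow_add₀ hane,
              ← zpow_natCast |(α j:ℝ)| (N - h)]
            exact zpow_le_zpow_right₀ h1 (by omega)
          calc |(sigmaCoeff α n (k*n - h) : ℝ) * ((N - h)! : ℝ) / ((k*n + μ - h)! : ℝ) *
                (α j : ℝ) ^ (N - h)|
              = |(sigmaCoeff α n (k*n - h) : ℝ)| * (((N-h)! : ℝ) / ((k*n+μ-h)! : ℝ)) *
                |(α j:ℝ)| ^ (N - h) := by
                rw [abs_mul, abs_div, abs_mul, abs_pow, Nat.abs_cast, Nat.abs_cast, mul_div_assoc]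
            _ ≤ |(sigmaCoeff α n (k*n - h) : ℝ)| * 1 * (z * |(α j:ℝ)| ^ (k*n - h)) := by
                refine mul_le_mul (mul_le_mul_of_nonneg_left e1 (abs_nonneg _)) e2
                  (pow_nonneg hc _) (by positivity)
            _ = z * (|(sigmaCoeff α n (k*n - h) : ℝ)| * |(α j:ℝ)| ^ (k*n - h)) := by ring
      _ = z * ∑ h ∈ Finset.range (min (k*n) N + 1),
            |(sigmaCoeff α n (k*n - h) : ℝ)| * |(α j:ℝ)| ^ (k*n - h) := by
          rw [Finset.mul_sum]
      _ ≤ z * P := by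
          refine mul_le_mul_of_nonneg_left (le_trans ?_ key) hznn
          have hinj : ∀ x ∈ Finset.range (min (k*n) N + 1), ∀ y ∈ Finset.range (min (k*n) N + 1),
              k*n - x = k*n - y → x = y := by
            intro x hx y hy hxy
            rw [Finset.mem_range, Nat.lt_succ_iff] at hx hy
            omega
          rw [← Finset.sum_image (f := fun i => |(sigmaCoeff α n i : ℝ)| * |(α j:ℝ)| ^ i) hinj]
          refine Finset.sum_le_sum_of_subset_of_nonneg ?_ fun i _ _ => by positivity
          intro i hi
          rw [Finset.mem_image] at hi
          obtain ⟨h, hh, rfl⟩ := hi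
          rw [Finset.mem_range]
          omega
  rw [hB, abs_mul, Nat.abs_cast]
  calc ((k*n+μ)! : ℝ) * |∑ N ∈ Finset.range (k*n+μ), ∑ h ∈ Finset.range (min (k*n) N + 1),
        (sigmaCoeff α n (k*n - h) : ℝ) * ((N-h)! : ℝ) / ((k*n+μ-h)! : ℝ) * (α j : ℝ) ^ (N-h)|
      ≤ ((k*n+μ)! : ℝ) * ((k*n+μ) * (z * P)) := by
        refine mul_le_mul_of_nonneg_left ?_ (by positivity)
        refine (Finset.abs_sum_le_sum_abs _ _).trans ?_
        refine (Finset.sum_le_sum inner).trans ?_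
        rw [Finset.sum_const, Finset.card_range, nsmul_eq_mul]
        exact le_of_eq (by push_cast; ring)
    _ = ((k * n + μ)! : ℝ) * ((k * n + μ : ℕ) : ℝ) * z * P := by push_cast; ring
end
end

section
/- Let k ≥ 1 be an integer, let α_1, …, α_k be pairwise distinct non-zero integers, let μ ≥ 0 be an integer, let n be a positive integer, let 1 ≤ j ≤ k and let p be a prime. Then |S_{n,μ,j}(1)|_p ≤ |(kn+μ)!·n!|_p · (max_{1≤i≤k}|α_i|_p)^{(k+1)n}. -/
open scoped BigOperators
open scoped Nat

noncomputable section

/-- `|S_{n,μ,j}(1)|_p ≤ |(kn+μ)!·n!|_p·(max_i |α_i|_p)^{(k+1)n}`. -/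
theorem statement16 (k : ℕ) (hk : 1 ≤ k) (α : Fin k → ℤ)
    (hα : ∀ j, α j ≠ 0) (hαinj : Function.Injective α)
    (μ : ℕ) (n : ℕ) (hn : 0 < n) (j : Fin k) (p : ℕ) [Fact p.Prime] :
    ‖Spadic p α n μ j‖ ≤
      ‖((((k * n + μ)! * n ! : ℕ)) : ℚ_[p])‖ * padicMaxAbs p α ^ ((k + 1) * n) := by
  have hkpos : 0 < k := hk
  haveI : Nonempty (Fin k) := ⟨⟨0, hkpos⟩⟩
  set M : ℝ := padicMaxAbs p α with hM
  have hnorm_eq : ∀ l : Fin k, ‖((α l : ℤ) : ℚ_[p])‖ = ((padicNorm p ((α l : ℚ))) : ℝ) := by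
    intro l
    rw [show ((α l : ℤ) : ℚ_[p]) = (((α l : ℚ)) : ℚ_[p]) by push_cast; ring]
    exact Padic.eq_padicNorm _
  have hle : ∀ l : Fin k, ‖((α l : ℤ) : ℚ_[p])‖ ≤ M := by
    intro l
    rw [hnorm_eq l, hM, padicMaxAbs]
    exact le_ciSup (f := fun l : Fin k => ((padicNorm p ((α l : ℚ))) : ℝ))
      (Set.Finite.bddAbove (Set.finite_range _)) l
  have hone : ∀ l : Fin k, ‖((α l : ℤ) : ℚ_[p])‖ ≤ 1 := fun l => Padic.norm_int_le_one _
  have hM0 : 0 ≤ M := le_trans (norm_nonneg _) (hle j)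
  -- bound on sigmaCoeff
  have hsigma : ∀ i : ℕ, i ≤ k * n → ‖((sigmaCoeff α n i : ℤ) : ℚ_[p])‖ ≤ M ^ (k * n - i) := by
    intro i hi
    have hMpow0 : (0:ℝ) ≤ M ^ (k * n - i) := pow_nonneg hM0 _
    rw [sigmaCoeff]
    push_cast
    rw [norm_mul]
    have h1 : ‖((-1 : ℚ_[p])) ^ i‖ = 1 := by
      rw [norm_pow, norm_neg, norm_one, one_pow]
    rw [h1, one_mul]
    apply IsUltrametricDist.norm_sum_le_of_forall_le_of_nonneg hMpow0
    intro v hv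
    simp only [Finset.mem_filter, Fintype.mem_piFinset, Finset.mem_range] at hv
    obtain ⟨hv1, hv2⟩ := hv
    calc ‖∏ l, ((n.choose (v l) : ℚ_[p]) * ((α l : ℤ) : ℚ_[p]) ^ (n - v l))‖
        = ∏ l, ‖(n.choose (v l) : ℚ_[p])‖ * ‖((α l : ℤ) : ℚ_[p])‖ ^ (n - v l) := by
          rw [norm_prod]; exact Finset.prod_congr rfl fun l _ => by rw [norm_mul, norm_pow]
      _ ≤ ∏ l, M ^ (n - v l) := by
          apply Finset.prod_le_prod
          · intro l _
            exact mul_nonneg (norm_nonneg _) (pow_nonneg (norm_nonneg _) _)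
          · intro l _
            have : ‖((n.choose (v l) : ℕ) : ℚ_[p])‖ ≤ 1 := by
              rw [show ((n.choose (v l) : ℕ) : ℚ_[p]) = (((n.choose (v l) : ℤ)) : ℚ_[p]) by
                push_cast; ring]
              exact Padic.norm_int_le_one _
            calc ‖((n.choose (v l)) : ℚ_[p])‖ * ‖((α l : ℤ) : ℚ_[p])‖ ^ (n - v l)
                ≤ 1 * M ^ (n - v l) := by
                  apply mul_le_mul this (pow_le_pow_left₀ (norm_nonneg _) (hle l) _)
                    (pow_nonneg (norm_nonneg _) _) zero_le_one
              _ = M ^ (n - v l) := one_mul _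
      _ = M ^ (∑ l, (n - v l)) := by rw [Finset.prod_pow_eq_pow_sum]
      _ = M ^ (k * n - i) := by
          congr 1
          have hvn : ∀ l : Fin k, v l ≤ n := fun l => Nat.lt_succ_iff.mp (hv1 l)
          have h3 : ∑ l, (n - v l) + i = k * n := by
            rw [← hv2, ← Finset.sum_add_distrib]
            have h4 : ∀ l : Fin k, n - v l + v l = n := fun l => Nat.sub_add_cancel (hvn l)
            rw [Finset.sum_congr rfl fun l _ => h4 l]
            simp [Finset.sum_const, Finset.card_univ, mul_comm]
          omega
  -- main
  rw [Spadic]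
  rw [norm_mul]
  have hfac : ‖(((k * n + μ)! : ℕ) : ℚ_[p]) * ((n ! : ℕ) : ℚ_[p])‖
      = ‖((((k * n + μ)! * n ! : ℕ)) : ℚ_[p])‖ := by push_cast; ring_nf
  rw [show ‖(((k * n + μ)! : ℕ) : ℚ_[p]) * ((n ! : ℕ) : ℚ_[p])‖
      = ‖((((k * n + μ)! * n ! : ℕ)) : ℚ_[p])‖ from hfac]
  apply mul_le_mul_of_nonneg_left _ (norm_nonneg _)
  -- bound the tsum
  apply IsUltrametricDist.norm_tsum_le_of_forall_le_of_nonneg (pow_nonneg hM0 _)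
  intro h
  rw [norm_mul, norm_mul, norm_mul]
  have hb1 : ‖((h ! : ℕ) : ℚ_[p])‖ ≤ 1 := by
    rw [show ((h ! : ℕ) : ℚ_[p]) = (((h ! : ℤ)) : ℚ_[p]) by push_cast; ring]
    exact Padic.norm_int_le_one _
  have hb2 : ‖(((n + h).choose h : ℕ) : ℚ_[p])‖ ≤ 1 := by
    rw [show (((n + h).choose h : ℕ) : ℚ_[p]) = ((((n + h).choose h : ℤ)) : ℚ_[p]) by
      push_cast; ring]
    exact Padic.norm_int_le_one _
  have hb3 : ‖((α j : ℤ) : ℚ_[p]) ^ (n + h + μ)‖ ≤ M ^ n := by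
    rw [norm_pow, show n + h + μ = n + (h + μ) by ring, pow_add]
    calc ‖((α j : ℤ) : ℚ_[p])‖ ^ n * ‖((α j : ℤ) : ℚ_[p])‖ ^ (h + μ)
        ≤ M ^ n * 1 := by
          apply mul_le_mul (pow_le_pow_left₀ (norm_nonneg _) (hle j) _)
            (pow_le_one₀ (norm_nonneg _) (hone j)) (pow_nonneg (norm_nonneg _) _)
            (pow_nonneg hM0 _)
      _ = M ^ n := mul_one _
  have hb4 : ‖∑ i ∈ Finset.range (k * n + 1),
      ((sigmaCoeff α n i : ℤ) : ℚ_[p]) * ((i + μ + n + h).choose (i + μ) : ℚ_[p]) *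
        ((α j : ℤ) : ℚ_[p]) ^ i‖ ≤ M ^ (k * n) := by
    apply IsUltrametricDist.norm_sum_le_of_forall_le_of_nonneg (pow_nonneg hM0 _)
    intro i hi
    rw [Finset.mem_range, Nat.lt_succ_iff] at hi
    rw [norm_mul, norm_mul, norm_pow]
    have hc : ‖(((i + μ + n + h).choose (i + μ) : ℕ) : ℚ_[p])‖ ≤ 1 := by
      rw [show (((i + μ + n + h).choose (i + μ) : ℕ) : ℚ_[p])
          = ((((i + μ + n + h).choose (i + μ) : ℤ)) : ℚ_[p]) by push_cast; ring]
      exact Padic.norm_int_le_one _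
    calc ‖((sigmaCoeff α n i : ℤ) : ℚ_[p])‖ * ‖(((i + μ + n + h).choose (i + μ)) : ℚ_[p])‖ *
          ‖((α j : ℤ) : ℚ_[p])‖ ^ i
        ≤ M ^ (k * n - i) * 1 * M ^ i := by
          apply mul_le_mul (mul_le_mul (hsigma i hi) hc (norm_nonneg _)
            (pow_nonneg hM0 _)) (pow_le_pow_left₀ (norm_nonneg _) (hle j) _)
            (pow_nonneg (norm_nonneg _) _)
            (by positivity)
      _ = M ^ (k * n) := by rw [mul_one, ← pow_add, Nat.sub_add_cancel hi]
  calc ‖((h !) : ℚ_[p])‖ * ‖(((n + h).choose h) : ℚ_[p])‖ * ‖((α j : ℤ) : ℚ_[p]) ^ (n + h + μ)‖ *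
        ‖∑ i ∈ Finset.range (k * n + 1),
          ((sigmaCoeff α n i : ℤ) : ℚ_[p]) * ((i + μ + n + h).choose (i + μ) : ℚ_[p]) *
            ((α j : ℤ) : ℚ_[p]) ^ i‖
      ≤ 1 * 1 * M ^ n * M ^ (k * n) := by
        apply mul_le_mul (mul_le_mul (mul_le_mul hb1 hb2 (norm_nonneg _) zero_le_one)
          hb3 (norm_nonneg _) (by positivity)) hb4 (norm_nonneg _) (by positivity)
    _ = M ^ ((k + 1) * n) := by rw [one_mul, one_mul, ← pow_add]; ring_nf
end
end

section
/- Let k ≥ 1 and m ≥ 3 be integers, let λ_0, …, λ_k be integers with λ_j ≠ 0 for at least one index j, and let R be a union of primes in at least k·φ(m)/(k+1) residue classes in the reduced residue system modulo m. Assume RH and GRH_m. Let α_1, …, α_k be pairwise distinct non-zero integers, set R′ := R ∩ [2, k·(max{1865, m^{φ(m)}, max_{1≤j≤k}|α_j|} + 2)], assume c_2(ᾱ;R′) < (k·e^{1+6.550·φ(m)}·m^{φ(m)})^{−k}, and write D := D(m,k,ᾱ;R′). Suppose H is a real number with max_{0≤i≤k}|λ_i| ≤ H and (log H)/D ≥ max{1866,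 m^{φ(m)}+1, max_{1≤j≤k}|α_j|+1, e^{2(2.539kφ(m)+5.724k+0.054)/D}+1}, and let n := max{a ∈ ℤ_{>0} : N_1(a,R′) ≥ 0}. Then n < ( (2.539kφ(m)+5.724k+0.054)·n/log n + log H )/D and n < 2·log H/D. -/
open scoped BigOperators
open Filter Real
open scoped Nat

noncomputable section

/-- The Riemann Hypothesis: every zero of the Riemann zeta function in the
critical strip lies on the critical line. -/
def RH : Prop :=
  ∀ s : ℂ, riemannZeta s = 0 → 0 < s.re → s.re < 1 → s.re = 1 / 2

/-- GRH for Dirichlet L-functions modulo `m` (equivalently, for the `m`-th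
cyclotomic Dedekind zeta function). -/
def GRH (m : ℕ) : Prop :=
  ∀ (_ : NeZero m) (χ : DirichletCharacter ℂ m) (s : ℂ),
    DirichletCharacter.LFunction χ s = 0 → 0 < s.re → s.re < 1 → s.re = 1 / 2

/-- Euler's factorial series `F_p(t) = ∑ n! tⁿ` in `ℚ_p`. -/
def eulerF (p : ℕ) [Fact p.Prime] (t : ℤ) : ℚ_[p] :=
  ∑' n : ℕ, (n ! : ℚ_[p]) * (t : ℚ_[p]) ^ n

/-- `max_{1≤j≤k} |α_j|` as a natural number. -/
def maxAbs {k : ℕ} (α : Fin k → ℤ) : ℕ :=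
  Finset.univ.sup fun j => (α j).natAbs

/-- `c₁ = 2^k (max |α_j|)^k`. -/
def c1val (k : ℕ) (α : Fin k → ℤ) : ℝ := 2 ^ k * (maxAbs α : ℝ) ^ k

/-- `c₂(ᾱ; R) = c₁ ∏_{p ∈ R} (max_i |α_i|_p)^{k+1}`. -/
def c2val (k : ℕ) (α : Fin k → ℤ) (R : Set ℕ) : ℝ :=
  c1val k α * ∏' p : R, padicMaxAbs (p : ℕ) α ^ (k + 1)

/-- `D(m,k,ᾱ;R)`. -/
def Dval (m k : ℕ) (α : Fin k → ℤ) (R : Set ℕ) : ℝ :=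
  -(Real.log (c2val k α R) + k * (Real.log k + (Real.log m + 6.550) * m.totient + 1))

/-- `|S_{n,μ,j}(1)|_p`, extended by `1` at non-primes. -/
def Snorm (p : ℕ) {k : ℕ} (α : Fin k → ℤ) (n μ : ℕ) (j : Fin k) : ℝ :=
  if hp : p.Prime then
    haveI : Fact p.Prime := ⟨hp⟩
    ‖Spadic p α n μ j‖
  else 1

/-- `T(n,μ) = ∑_{j=0}^k λ_j B_{n,μ,j}(1)`. -/
def Tval {k : ℕ} (lam : Fin (k + 1) → ℤ) (α : Fin k → ℤ) (n μ : ℕ) : ℚ :=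
  (lam 0 : ℚ) * B0 α n μ + ∑ j : Fin k, (lam j.succ : ℚ) * Bj α n μ j

/-- The quantity `N₁(a, R)`. -/
def N1 (m k : ℕ) (α : Fin k → ℤ) (R : Set ℕ) (H : ℝ) (a : ℝ) : ℝ :=
  a * (Real.log (c2val k α R) + k * (Real.log k + (Real.log m + 6.55) * m.totient + 1)) +
    (2.539 + 5.440 / m.totient) * k * m.totient * a / Real.log a +
    2.5 * Real.log a + Real.log (k + 1) + 2.5 * Real.log k + Real.log H +
    ((k : ℝ) - 1) * Real.log (maxAbs α) + Real.log (Real.sqrt (2 * π)) + 1 +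
    k * ((Real.log m + 6.55) * m.totient + 2) +
    (2.539 + 5.440 / m.totient) * k * m.totient / Real.log a + 19 / (12 * a)

/-- The quantity `N₂(a)`. -/
def N2 (m k : ℕ) (α : Fin k → ℤ) (ε H : ℝ) (a : ℝ) : ℝ :=
  -(ε * a * Real.log a) + (k + 1) * a * Real.log (Real.log a) +
    a * (Real.log (c1val k α) - k + Real.log k +
      2 * (k + 1) * ((Real.log m + 6.55) * m.totient + 1)) +
    (2.539 + 5.440 / m.totient) * 2 * m.totient * a * (k + 1) / Real.log a +
    2 * Real.log a ^ 2 / Real.log (Real.log a) + ((k : ℝ) + 3.5) * Real.log a +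
    Real.log k * Real.log a / Real.log (Real.log a) + k * Real.log (Real.log a) +
    Real.log (k + 1) + 2.5 * Real.log k + ((k : ℝ) - 1) * Real.log (maxAbs α) +
    2 * ((Real.log m + 6.55) * m.totient + 1) * k + Real.log (Real.sqrt (2 * π)) + 1 +
    Real.log H + (2.539 + 5.440 / m.totient) * 2 * m.totient * k / Real.log a +
    Real.log a / (a * Real.log (Real.log a)) + 29 / (12 * a)

section AuxStatement18

lemma aux_expinv (x : ℝ) (hx1 : x < 1) : Real.exp x ≤ 1/(1-x) := by
  have h3 := Real.add_one_le_exp (-x)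
  have h4 : (0:ℝ) < Real.exp x := Real.exp_pos _
  have h5 : Real.exp (-x) * Real.exp x = 1 := by rw [← Real.exp_add]; simp
  rw [le_div_iff₀ (by linarith)]
  nlinarith [mul_le_mul_of_nonneg_right h3 h4.le]

lemma aux_exp752 : Real.exp 7.52 ≤ 1866 := by
  have h1 : Real.exp 7.52 = (Real.exp 1)^7 * (Real.exp 0.0052)^100 := by
    rw [← Real.exp_nat_mul, ← Real.exp_nat_mul, ← Real.exp_add]; norm_num
  have h2 : Real.exp 0.0052 ≤ 1/0.9948 := by
    have := aux_expinv 0.0052 (by norm_num); norm_num at this ⊢; linarith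
  have h5 : (Real.exp 1)^7 ≤ 2.7182818286^7 :=
    pow_le_pow_left₀ (Real.exp_pos 1).le Real.exp_one_lt_d9.le 7
  have h6 : (Real.exp 0.0052)^100 ≤ (1/0.9948)^100 :=
    pow_le_pow_left₀ (Real.exp_pos _).le h2 100
  calc Real.exp 7.52 ≤ 2.7182818286^7 * (1/0.9948)^100 := by
        rw [h1]; exact mul_le_mul h5 h6 (by positivity) (by positivity)
    _ ≤ 1866 := by norm_num

lemma aux_log5_ge : (1.6:ℝ) ≤ Real.log 5 := by
  rw [Real.le_log_iff_exp_le (by norm_num)]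
  have h04 : (1.4906:ℝ) ≤ Real.exp 0.4 := by
    have h := Real.sum_le_exp_of_nonneg (x := 0.4) (by norm_num) 4
    simp [Finset.sum_range_succ, Nat.factorial] at h
    norm_num at h; linarith
  have h2 : Real.exp 1.6 * Real.exp 0.4 = (Real.exp 1)^2 := by
    rw [← Real.exp_add, ← Real.exp_nat_mul]; norm_num
  have h3 : (Real.exp 1)^2 ≤ 2.7182818286^2 :=
    pow_le_pow_left₀ (Real.exp_pos 1).le Real.exp_one_lt_d9.le 2
  nlinarith [Real.exp_pos (1.6:ℝ), Real.exp_pos (0.4:ℝ)]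

lemma aux_log4_le : Real.log 4 ≤ 1.39 := by
  have h : (4:ℝ) = 2^2 := by norm_num
  rw [h, Real.log_pow]
  have := Real.log_two_lt_d9
  norm_num; linarith

lemma aux_logsqrt2pi : Real.log (Real.sqrt (2*Real.pi)) ≤ 1 := by
  have hpi : Real.pi < 3.15 := by linarith [Real.pi_lt_d2]
  have h2 : (0:ℝ) ≤ 2*Real.pi := by nlinarith [Real.pi_gt_three]
  rw [Real.log_sqrt h2]
  have hexp2 : (6.3:ℝ) ≤ Real.exp 2 := by
    have h := Real.sum_le_exp_of_nonneg (x := (2:ℝ)) (by norm_num) 5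
    simp [Finset.sum_range_succ, Nat.factorial] at h
    norm_num at h; linarith
  have h3 : Real.log (2*Real.pi) ≤ Real.log (Real.exp 2) :=
    Real.log_le_log (by nlinarith [Real.pi_gt_three]) (by nlinarith)
  rw [Real.log_exp] at h3; linarith

lemma aux_exp_key (x : ℝ) (hx : 7.52 ≤ x) : 27.78 * x^2 ≤ Real.exp x := by
  have hx0 : (0:ℝ) ≤ x := by linarith
  have hsum := Real.sum_le_exp_of_nonneg hx0 13
  simp [Finset.sum_range_succ, Nat.factorial] at hsum
  have base : ∀ jj : ℕ, (7.52:ℝ)^jj * x^2 ≤ x^(jj+2) := by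
    intro jj
    have h1 : (7.52:ℝ)^jj ≤ x^jj := pow_le_pow_left₀ (by norm_num) hx jj
    calc (7.52:ℝ)^jj * x^2 ≤ x^jj * x^2 :=
          mul_le_mul_of_nonneg_right h1 (sq_nonneg x)
      _ = x^(jj+2) := by ring
  have b1 := base 1; have b2 := base 2; have b3 := base 3; have b4 := base 4
  have b5 := base 5; have b6 := base 6; have b7 := base 7; have b8 := base 8
  have b9 := base 9; have b10 := base 10
  norm_num at b1 b2 b3 b4 b5 b6 b7 b8 b9 b10 hsum
  nlinarith [hsum, b1, b2, b3, b4, b5, b6, b7, b8, b9, b10, sq_nonneg x, hx0]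

lemma aux_logk_bound (k : ℕ) (hk : 1 ≤ k) :
    Real.log ((k:ℝ)+1) + 2.5 * Real.log (k:ℝ) ≤ 3.2*(k:ℝ) - 2.5 := by
  have hk1 : (1:ℝ) ≤ (k:ℝ) := by exact_mod_cast hk
  have h1 : ((k:ℝ)+1) ≤ 2^(k:ℕ) := by
    have h := Nat.lt_two_pow_self (n := k)
    have h' : (k:ℕ)+1 ≤ 2^k := h
    exact_mod_cast h'
  have h2 : Real.log ((k:ℝ)+1) ≤ (k:ℝ) * Real.log 2 := by
    calc Real.log ((k:ℝ)+1) ≤ Real.log ((2:ℝ)^(k:ℕ)) :=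
          Real.log_le_log (by linarith) h1
      _ = (k:ℝ) * Real.log 2 := by rw [Real.log_pow]
  have h3 : Real.log (k:ℝ) ≤ (k:ℝ) - 1 := Real.log_le_sub_one_of_pos (by linarith)
  have h4 := Real.log_two_lt_d9
  nlinarith

lemma aux_phi_bound (m : ℕ) (hm : 3 ≤ m) (L : ℝ) (hL : 7.52 ≤ L)
    (hb : (m.totient:ℝ) * Real.log m ≤ L) :
    (m.totient:ℝ) * Real.log m + 6.55*(m.totient:ℝ) + 2.539*(m.totient:ℝ)/L
      ≤ 5.094*L + 1.587 := by
  have hlog4 : Real.log 4 ≤ 1.39 := aux_log4_le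
  have hlog5 : (1.6:ℝ) ≤ Real.log 5 := aux_log5_ge
  have hL0 : (0:ℝ) < L := by linarith
  rcases le_or_gt m 4 with h4 | h5
  · interval_cases m
    · have hφ : Nat.totient 3 = 2 := by decide
      rw [hφ]
      have hlm : Real.log 3 ≤ 1.39 :=
        le_trans (Real.log_le_log (by norm_num) (by norm_num)) hlog4
      have hlm0 : (0:ℝ) ≤ Real.log 3 := Real.log_nonneg (by norm_num)
      have hd : 2.539*(2:ℝ)/L ≤ 0.676 := by
        rw [div_le_iff₀ hL0]; nlinarith
      push_cast; nlinarith
    · have hφ : Nat.totient 4 = 2 := by decide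
      rw [hφ]
      have hlm0 : (0:ℝ) ≤ Real.log 4 := Real.log_nonneg (by norm_num)
      have hd : 2.539*(2:ℝ)/L ≤ 0.676 := by
        rw [div_le_iff₀ hL0]; nlinarith
      push_cast; nlinarith
  · have hφ0 : (0:ℝ) < (m.totient:ℝ) := by
      have := Nat.totient_pos.mpr (show 0 < m by omega); exact_mod_cast this
    have hlm : (1.6:ℝ) ≤ Real.log m :=
      le_trans hlog5 (Real.log_le_log (by norm_num) (by exact_mod_cast h5))
    have h16 : 1.6 * (m.totient:ℝ) ≤ L := by nlinarith
    have hd : 2.539*(m.totient:ℝ)/L ≤ 1.587 := by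
      rw [div_le_iff₀ hL0]; nlinarith
    nlinarith

lemma aux_maxAbs_ge_one {k : ℕ} (hk : 1 ≤ k) (α : Fin k → ℤ) (hα : ∀ j, α j ≠ 0) :
    1 ≤ maxAbs α := by
  have j0 : Fin k := ⟨0, hk⟩
  have h1 : (α j0).natAbs ≤ maxAbs α := by
    unfold maxAbs; exact Finset.le_sup (f := fun j => (α j).natAbs) (Finset.mem_univ j0)
  have h2 : 1 ≤ (α j0).natAbs := Int.natAbs_pos.mpr (hα j0)
  omega

lemma aux_padicMaxAbs_pos {k : ℕ} (hk : 1 ≤ k) (α : Fin k → ℤ) (hα : ∀ j, α j ≠ 0)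
    (p : ℕ) (hp : p.Prime) : 0 < padicMaxAbs p α := by
  haveI : Fact p.Prime := ⟨hp⟩
  have j0 : Fin k := ⟨0, hk⟩
  have hbdd : BddAbove (Set.range fun j : Fin k => ((padicNorm p ((α j : ℚ))) : ℝ)) :=
    Set.Finite.bddAbove (Set.finite_range _)
  have h1 : ((padicNorm p ((α j0 : ℚ))) : ℝ) ≤ padicMaxAbs p α := le_ciSup hbdd j0
  have h2 : (0:ℚ) < padicNorm p ((α j0 : ℚ)) := by
    have hnz : ((α j0 : ℚ)) ≠ 0 := by exact_mod_cast hα j0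
    have hne := padicNorm.nonzero (p := p) hnz
    have hn := padicNorm.nonneg (p := p) ((α j0 : ℚ))
    rcases lt_or_eq_of_le hn with h | h
    · exact h
    · exact absurd h.symm hne
  have h3 : (0:ℝ) < ((padicNorm p ((α j0 : ℚ))) : ℝ) := by exact_mod_cast h2
  linarith

lemma aux_c2pos {k : ℕ} (hk : 1 ≤ k) (α : Fin k → ℤ) (hα : ∀ j, α j ≠ 0)
    (R' : Set ℕ) (hfin : R'.Finite) (hprime : ∀ p ∈ R', p.Prime) :
    0 < c2val k α R' := by
  have hM := aux_maxAbs_ge_one hk α hα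
  have hMr : (1:ℝ) ≤ (maxAbs α : ℝ) := by exact_mod_cast hM
  have hc1 : 0 < c1val k α := by unfold c1val; positivity
  have hpr : 0 < ∏' p : R', padicMaxAbs (p : ℕ) α ^ (k + 1) := by
    letI := hfin.fintype
    rw [tprod_fintype]
    apply Finset.prod_pos
    intro p _
    exact pow_pos (aux_padicMaxAbs_pos hk α hα p (hprime p p.2)) _
  exact mul_pos hc1 hpr

end AuxStatement18

set_option maxHeartbeats 2000000 in
/-- Bounds for `n = max{a ∈ ℤ_{>0} : N₁(a,R′) ≥ 0}`:
`n < ((2.539kφ(m)+5.724k+0.054)·n/log n + log H)/D` and `n < 2 log H/D`. -/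
theorem statement18 (k m : ℕ) (hk : 1 ≤ k) (hm : 3 ≤ m)
    (lam : Fin (k + 1) → ℤ) (hlam : ∃ i, lam i ≠ 0)
    (A : Finset ℕ) (hA : ∀ a ∈ A, a < m ∧ Nat.Coprime a m)
    (hAcard : (k * m.totient : ℝ) / (k + 1) ≤ A.card)
    (R : Set ℕ) (hR : R = {p : ℕ | p.Prime ∧ p % m ∈ A})
    (hRH : RH) (hGRH : GRH m)
    (α : Fin k → ℤ) (hα : ∀ j, α j ≠ 0) (hαinj : Function.Injective α)
    (R' : Set ℕ)
    (hR' : R' = R ∩ Set.Icc 2 (k * (max (max 1865 (m ^ m.totient)) (maxAbs α) + 2)))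
    (hc2 : c2val k α R' <
      ((k : ℝ) * Real.exp (1 + 6.550 * m.totient) * (m : ℝ) ^ m.totient) ^ (-(k : ℤ)))
    (D : ℝ) (hD : D = Dval m k α R')
    (H : ℝ) (hH : ∀ i, (|lam i| : ℝ) ≤ H)
    (hlogH : Real.log H / D ≥
      max (max 1866 ((m : ℝ) ^ m.totient + 1))
        (max ((maxAbs α : ℝ) + 1)
          (Real.exp (2 * (2.539 * k * m.totient + 5.724 * k + 0.054) / D) + 1)))
    (n : ℕ)
    (hn : IsGreatest {a : ℕ | 0 < a ∧ 0 ≤ N1 m k α R' H (a : ℝ)} n) :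
    (n : ℝ) < ((2.539 * k * m.totient + 5.724 * k + 0.054) * n / Real.log n +
        Real.log H) / D ∧
      (n : ℝ) < 2 * Real.log H / D := by
  have hφpos : 0 < m.totient := Nat.totient_pos.mpr (by omega)
  have hφ1 : (1:ℝ) ≤ (m.totient:ℝ) := by exact_mod_cast hφpos
  have hφr0 : (0:ℝ) < (m.totient:ℝ) := by linarith only [hφ1]
  have hk1 : (1:ℝ) ≤ (k:ℝ) := by exact_mod_cast hk
  have hk0 : (0:ℝ) ≤ (k:ℝ) := by linarith only [hk1]
  have hm1 : (1:ℝ) < (m:ℝ) := by exact_mod_cast (show 1 < m by omega)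
  have hlogm : 0 < Real.log m := Real.log_pos hm1
  have hM1 : (1:ℝ) ≤ (maxAbs α : ℝ) := by exact_mod_cast aux_maxAbs_ge_one hk α hα
  -- c₂ > 0
  have hfin : R'.Finite := by
    rw [hR']; exact Set.Finite.inter_of_right (Set.finite_Icc _ _) R
  have hprime : ∀ p ∈ R', p.Prime := by
    intro p hp; rw [hR', hR] at hp; exact hp.1.1
  have hc2pos : 0 < c2val k α R' := aux_c2pos hk α hα R' hfin hprime
  -- D > 0
  have hDpos : 0 < D := by
    have hlogb := Real.log_lt_log hc2pos hc2
    rw [Real.log_zpow, Real.log_mul (by positivity) (by positivity),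
      Real.log_mul (by positivity) (Real.exp_ne_zero _), Real.log_exp,
      Real.log_pow] at hlogb
    rw [hD]; unfold Dval
    push_cast at hlogb ⊢
    linarith only [hlogb]
  -- extract the max bounds
  have h1866X : (1866:ℝ) ≤ Real.log H / D :=
    le_trans (le_trans (le_max_left _ _) (le_max_left _ _)) hlogH
  have hXm : (m:ℝ)^m.totient + 1 ≤ Real.log H / D :=
    le_trans (le_trans (le_max_right _ _) (le_max_left _ _)) hlogH
  have hXM : (maxAbs α:ℝ) + 1 ≤ Real.log H / D :=
    le_trans (le_trans (le_max_left _ _) (le_max_right _ _)) hlogH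
  have hXE : Real.exp (2 * (2.539 * k * m.totient + 5.724 * k + 0.054) / D) + 1
      ≤ Real.log H / D :=
    le_trans (le_trans (le_max_right _ _) (le_max_right _ _)) hlogH
  have hXpos : (0:ℝ) ≤ Real.log H / D := by linarith only [h1866X]
  have hlogH0 : 0 < Real.log H := by
    have h := (le_div_iff₀ hDpos).mp h1866X
    linarith only [h, hDpos]
  -- rewriting the leading coefficient of N1
  have h1 : Real.log (c2val k α R') +
      (k:ℝ) * (Real.log (k:ℝ) + (Real.log (m:ℝ) + 6.55) * (m.totient:ℝ) + 1) = -D := by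
    rw [hD]; unfold Dval; norm_num
  -- membership criterion
  have hmem : ∀ a : ℕ, 0 < a → (a:ℝ) * D ≤ Real.log H →
      a ∈ {a : ℕ | 0 < a ∧ 0 ≤ N1 m k α R' H (a : ℝ)} := by
    intro a ha haD
    refine ⟨ha, ?_⟩
    have ha1 : (1:ℝ) ≤ (a:ℝ) := by exact_mod_cast ha
    have hla : 0 ≤ Real.log (a:ℝ) := Real.log_nonneg ha1
    unfold N1
    rw [h1]
    have ht1 : 0 ≤ (2.539 + 5.440/(m.totient:ℝ)) * (k:ℝ) * (m.totient:ℝ) * (a:ℝ) /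
        Real.log (a:ℝ) := div_nonneg (by positivity) hla
    have ht2 : 0 ≤ 2.5 * Real.log (a:ℝ) := by linarith only [hla]
    have ht3 : 0 ≤ Real.log ((k:ℝ)+1) := Real.log_nonneg (by linarith only [hk1])
    have ht4 : 0 ≤ Real.log (k:ℝ) := Real.log_nonneg hk1
    have ht6 : 0 ≤ ((k:ℝ)-1) * Real.log (maxAbs α : ℝ) :=
      mul_nonneg (by linarith only [hk1]) (Real.log_nonneg hM1)
    have ht7 : 0 ≤ Real.log (Real.sqrt (2*π)) := by
      apply Real.log_nonneg
      rw [Real.le_sqrt (by norm_num) (by linarith only [Real.pi_gt_three])]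
      norm_num
      linarith only [Real.pi_gt_three]
    have ht9 : 0 ≤ (k:ℝ) * ((Real.log (m:ℝ) + 6.55) * (m.totient:ℝ) + 2) := by
      have hml : 0 ≤ Real.log (m:ℝ) * (m.totient:ℝ) := mul_nonneg hlogm.le hφr0.le
      exact mul_nonneg hk0 (by linarith only [hml, hφ1])
    have ht10 : 0 ≤ (2.539 + 5.440/(m.totient:ℝ)) * (k:ℝ) * (m.totient:ℝ) /
        Real.log (a:ℝ) := div_nonneg (by positivity) hla
    have ht11 : 0 ≤ 19/(12*(a:ℝ)) := by positivity
    linarith only [haD, ht1, ht2, ht3, ht4, ht6, ht7, ht9, ht10, ht11]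
  -- a lower bound for n
  have ha0fl : ((⌊Real.log H / D⌋₊:ℕ):ℝ) ≤ Real.log H / D := Nat.floor_le hXpos
  have ha01866 : 1866 ≤ ⌊Real.log H / D⌋₊ := Nat.le_floor (by exact_mod_cast h1866X)
  have hna : ⌊Real.log H / D⌋₊ ≤ n :=
    hn.2 (hmem _ (by omega) ((le_div_iff₀ hDpos).mp ha0fl))
  have hn1866 : 1866 ≤ n := le_trans ha01866 hna
  have hnn1 : (1866:ℝ) ≤ (n:ℝ) := by exact_mod_cast hn1866
  have hnpos : (0:ℝ) < (n:ℝ) := by linarith only [hnn1]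
  have hXn : Real.log H / D - 1 < (n:ℝ) :=
    lt_of_lt_of_le (Nat.sub_one_lt_floor _) (by exact_mod_cast hna)
  have hmn : (m:ℝ)^m.totient ≤ (n:ℝ) := by linarith only [hXm, hXn]
  have hMn : (maxAbs α:ℝ) ≤ (n:ℝ) := by linarith only [hXM, hXn]
  have hEn : Real.exp (2 * (2.539 * k * m.totient + 5.724 * k + 0.054) / D) ≤ (n:ℝ) := by
    linarith only [hXE, hXn]
  -- the logarithm of n
  set L : ℝ := Real.log (n:ℝ) with hLdef
  clear_value L
  have hL : 7.52 ≤ L := by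
    rw [hLdef]
    exact (Real.le_log_iff_exp_le hnpos).mpr (le_trans aux_exp752 hnn1)
  have hLpos : (0:ℝ) < L := by linarith only [hL]
  have hLm : (m.totient:ℝ) * Real.log (m:ℝ) ≤ L := by
    rw [hLdef]
    have h := Real.log_le_log (by positivity) hmn
    rwa [Real.log_pow] at h
  have hLM : Real.log (maxAbs α : ℝ) ≤ L := by
    rw [hLdef]
    exact Real.log_le_log (by linarith only [hM1]) hMn
  have hLC : 2 * (2.539 * (k:ℝ) * (m.totient:ℝ) + 5.724 * (k:ℝ) + 0.054) / D ≤ L := by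
    rw [hLdef]
    exact (Real.le_log_iff_exp_le hnpos).mpr hEn
  have key : 27.78 * L^2 ≤ (n:ℝ) := by
    have h2 : Real.exp L = (n:ℝ) := by rw [hLdef]; exact Real.exp_log hnpos
    have h := aux_exp_key L hL
    rwa [h2] at h
  have hq : 27.78 * L ≤ (n:ℝ)/L := by
    rw [le_div_iff₀ hLpos]; linarith only [key, sq_nonneg L]
  -- N1(n) ≥ 0 rearranged
  have hN1 : (0:ℝ) ≤ N1 m k α R' H (n:ℝ) := hn.1.2
  unfold N1 at hN1
  rw [h1, ← hLdef] at hN1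
  have fφ : (2.539 + 5.440/(m.totient:ℝ)) * (k:ℝ) * (m.totient:ℝ)
      = 2.539*(k:ℝ)*(m.totient:ℝ) + 5.44*(k:ℝ) := by
    field_simp; ring
  rw [fφ] at hN1
  -- junk bounds
  have hpb := aux_phi_bound m hm L hL hLm
  have hJ1 : (k:ℝ)*((Real.log (m:ℝ) + 6.55)*(m.totient:ℝ) + 2)
      + 2.539*(k:ℝ)*(m.totient:ℝ)/L ≤ (k:ℝ)*(5.094*L + 1.587) + 2*(k:ℝ) := by
    have h := mul_le_mul_of_nonneg_left hpb hk0
    have e : (k:ℝ)*((Real.log (m:ℝ) + 6.55)*(m.totient:ℝ) + 2)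
        + 2.539*(k:ℝ)*(m.totient:ℝ)/L
        = (k:ℝ)*((m.totient:ℝ) * Real.log (m:ℝ) + 6.55*(m.totient:ℝ)
          + 2.539*(m.totient:ℝ)/L) + 2*(k:ℝ) := by ring
    rw [e]; linarith only [h]
  have hJ2 : 5.44*(k:ℝ)/L ≤ 0.724*(k:ℝ) := by
    rw [div_le_iff₀ hLpos]
    have h := mul_nonneg hk0 (show (0:ℝ) ≤ L - 7.52 by linarith only [hL])
    linarith only [h, hk0]
  have hJ3 := aux_logk_bound k hk
  have hJ4 : ((k:ℝ)-1) * Real.log (maxAbs α : ℝ) ≤ (k:ℝ)*L - L := by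
    have h := mul_nonneg (show (0:ℝ) ≤ (k:ℝ)-1 by linarith only [hk1])
      (show (0:ℝ) ≤ L - Real.log (maxAbs α : ℝ) by linarith only [hLM])
    linarith only [h]
  have hJ5 : 19/(12*(n:ℝ)) ≤ 0.001 := by
    rw [div_le_iff₀ (by positivity)]; linarith only [hnn1]
  have hJ6 := aux_logsqrt2pi
  have per : 6.094*L + 7.511 ≤ 0.284*((n:ℝ)/L) := by linarith only [hq, hL]
  have budget1 : (k:ℝ)*(6.094*L + 7.511) ≤ (k:ℝ)*(0.284*((n:ℝ)/L)) :=
    mul_le_mul_of_nonneg_left per hk0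
  have budget2 : 1.5*L - 0.499 < 0.054*((n:ℝ)/L) := by linarith only [hq, hL]
  -- main inequality
  have goal1 : (n:ℝ) * D <
      (2.539 * (k:ℝ) * (m.totient:ℝ) + 5.724 * (k:ℝ) + 0.054) * (n:ℝ) / L
        + Real.log H := by
    have expand : (2.539 * (k:ℝ) * (m.totient:ℝ) + 5.724 * (k:ℝ) + 0.054) * (n:ℝ) / L
        = 2.539*(k:ℝ)*(m.totient:ℝ)*((n:ℝ)/L) + 5.44*(k:ℝ)*((n:ℝ)/L)
          + (k:ℝ)*(0.284*((n:ℝ)/L)) + 0.054*((n:ℝ)/L) := by ring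
    have ehN1 : (2.539*(k:ℝ)*(m.totient:ℝ) + 5.44*(k:ℝ)) * (n:ℝ) / L
        = 2.539*(k:ℝ)*(m.totient:ℝ)*((n:ℝ)/L) + 5.44*(k:ℝ)*((n:ℝ)/L) := by ring
    rw [expand]
    ring_nf at hN1 hJ1 hJ2 hJ3 hJ4 hJ5 hJ6 budget1 budget2 ⊢
    linarith only [hN1, hJ1, hJ2, hJ3, hJ4, hJ5, hJ6, budget1, budget2]
  constructor
  · rw [lt_div_iff₀ hDpos]
    exact goal1
  · rw [lt_div_iff₀ hDpos]
    have h2C : 2 * (2.539 * (k:ℝ) * (m.totient:ℝ) + 5.724 * (k:ℝ) + 0.054) ≤ L*D := by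
      have h := (div_le_iff₀ hDpos).mp hLC
      linarith only [h]
    have hCL : (2.539 * (k:ℝ) * (m.totient:ℝ) + 5.724 * (k:ℝ) + 0.054) * (n:ℝ) / L
        ≤ D/2*(n:ℝ) := by
      rw [div_le_iff₀ hLpos]
      have w := mul_nonneg (show (0:ℝ) ≤ L*D - 2 * (2.539 * (k:ℝ) * (m.totient:ℝ)
        + 5.724 * (k:ℝ) + 0.054) by linarith only [h2C]) hnpos.le
      linarith only [w]
    linarith only [goal1, hCL]
end
end
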